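/- arXiv:2101.01982 — 4 statements merged into one kernel-verified Lean document; each statement's English description precedes it below -/
import Mathlib

section
/- Let c ∈ [0,1/2]. Every rational number x ∈ ℚ ∩ [c,1] is a returning point for the random c-Lüroth transformation: for every ω ∈ {0,1}^ℕ there exist an integer n ≥ 0 and an integer r ≥ 1 such that T_ω^n(x) = T_ω^{n+r}(x). -/
open MeasureTheory Filter Set
open scoped Classical ENNReal

noncomputable section

/-- The Lüroth map `T_L`. -/
def TL (x : ℝ) : ℝ :=
  if x = 0 then 0
  else if x = 1 then 1
  else (⌈1/x⌉ : ℝ) * ((⌈1/x⌉ : ℝ) - 1) * x - ((⌈1/x⌉ : ℝ) - 1)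

/-- The alternating Lüroth map `T_A`. -/
def TA (x : ℝ) : ℝ := 1 - TL x

/-- `z_n⁺ = z_n + c·z_n·z_{n-1}`. -/
def zp (c : ℝ) (n : ℕ) : ℝ := 1/(n:ℝ) + c * (1/(n:ℝ)) * (1/((n:ℝ) - 1))

/-- `z_n⁻ = z_n − c·z_n·z_{n+1}`. -/
def zm (c : ℝ) (n : ℕ) : ℝ := 1/(n:ℝ) - c * (1/(n:ℝ)) * (1/((n:ℝ) + 1))

/-- The maps `T_{0,c}` (`j = false`) and `T_{1,c}` (`j = true`); for `c = 0` the points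
`0` and `z_n`, `n ≥ 2`, are additionally sent to `1`. -/
def Tc (j : Bool) (c : ℝ) (x : ℝ) : ℝ :=
  if c = 0 ∧ (x = 0 ∨ ∃ n : ℕ, 2 ≤ n ∧ x = 1/(n:ℝ)) then 1
  else if x = 1 then 1
  else if (j = false ∧ ∃ n : ℕ, 2 ≤ n ∧ 1/(n:ℝ) ≤ x ∧ x < zp c n) ∨
          (j = true ∧ ∃ n : ℕ, 2 ≤ n ∧ 1/(n:ℝ) ≤ x ∧ x ≤ zm c (n-1)) then TA x
  else TL x

/-- Random iteration: `Tom c ω n = T_{ω_n,c} ∘ ⋯ ∘ T_{ω_1,c}` (paths 0-indexed). -/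
def Tom (c : ℝ) (ω : ℕ → Bool) : ℕ → ℝ → ℝ
  | 0 => fun x => x
  | n+1 => fun x => Tc (ω n) c (Tom c ω n x)

/-- The digit `d_{n+1}(ω,x)` (0-indexed: `dig c ω x n` is the digit determined by `T_ω^n x`). -/
def dig (c : ℝ) (ω : ℕ → Bool) (x : ℝ) (n : ℕ) : ℕ :=
  if Tom c ω n x = 1 then 2 else (⌈1/(Tom c ω n x)⌉).toNat

/-- The switch region `S = [c,1] ∩ ⋃_{n≥2} [z_n⁺, z_{n-1}⁻]`. -/
def SwitchS (c : ℝ) : Set ℝ :=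
  {y | y ∈ Set.Icc c 1 ∧ ∃ n : ℕ, 2 ≤ n ∧ zp c n ≤ y ∧ y ≤ zm c (n-1)}

/-- The sign `s_{n+1}(ω,x)` (0-indexed: `sgn c ω x n` is the sign determined by `T_ω^n x`). -/
def sgn (c : ℝ) (ω : ℕ → Bool) (x : ℝ) (n : ℕ) : ℕ :=
  if c = 0 then (if ω n then 1 else 0)
  else if (ω n = false ∧ Tom c ω n x ∈ SwitchS c) ∨
          (∃ d : ℕ, 1 ≤ d ∧ zm c d < Tom c ω n x ∧ Tom c ω n x < 1/(d:ℝ)) ∨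
          Tom c ω n x = 1 then 0
  else 1

/-- The c-Lüroth expansion: `expansion c ω x n = (s_{n+1}(ω,x), d_{n+1}(ω,x))`. -/
def expansion (c : ℝ) (ω : ℕ → Bool) (x : ℝ) (n : ℕ) : ℕ × ℕ :=
  (sgn c ω x n, dig c ω x n)

/-- A sequence is ultimately periodic if some tail is periodic. -/
def UltimatelyPeriodic {α : Type*} (a : ℕ → α) : Prop :=
  ∃ N r : ℕ, 1 ≤ r ∧ ∀ n, N ≤ n → a (n + r) = a n

/-- The `n`-th convergent `p_n/q_n(ω,x)`. -/
def conv (c : ℝ) (ω : ℕ → Bool) (x : ℝ) (n : ℕ) : ℝ :=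
  ∑ k ∈ Finset.range n,
    (-1 : ℝ) ^ (∑ i ∈ Finset.range k, sgn c ω x i) *
      ((dig c ω x k : ℝ) - 1 + (sgn c ω x k : ℝ)) /
      (∏ i ∈ Finset.range (k+1), ((dig c ω x i : ℝ) * ((dig c ω x i : ℝ) - 1)))

/-- The value `Σ_{n≥1} (−1)^{s_1+⋯+s_{n−1}} (d_n − 1 + s_n)/∏_{i≤n} d_i(d_i−1)` of a
sign-digit sequence (0-indexed). -/
def lurothSum (a : ℕ → ℕ × ℕ) : ℝ :=
  ∑' n : ℕ,
    (-1 : ℝ) ^ (∑ i ∈ Finset.range n, (a i).1) *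
      (((a n).2 : ℝ) - 1 + ((a n).1 : ℝ)) /
      (∏ i ∈ Finset.range (n+1), (((a i).2 : ℝ) * (((a i).2 : ℝ) - 1)))

/-- The Bernoulli `(p, 1-p)` product measure on `{0,1}^ℕ` (coordinate `0 ↔ false` has
probability `p`). -/
def IsBernoulli (p : ℝ) (m : Measure (ℕ → Bool)) : Prop :=
  IsProbabilityMeasure m ∧
  ∀ (n : ℕ) (f : Fin n → Bool),
    m {ω : ℕ → Bool | ∀ i : Fin n, ω i = f i} =
      ∏ i : Fin n, ENNReal.ofReal (if f i then 1 - p else p)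

/-- The random 0-Lüroth transformation `L_0`. -/
def L0 (q : (ℕ → Bool) × ℝ) : (ℕ → Bool) × ℝ := (fun n => q.1 (n+1), Tc (q.1 0) 0 q.2)

/-- The `n`-th approximation coefficient `θ_n(ω,x)` (1-indexed `n`). -/
def theta (ω : ℕ → Bool) (x : ℝ) (n : ℕ) : ℝ :=
  ((dig 0 ω x (n-1) : ℝ) - (sgn 0 ω x (n-1) : ℝ)) *
    (∏ i ∈ Finset.range (n-1), ((dig 0 ω x i : ℝ) * ((dig 0 ω x i : ℝ) - 1))) *
    |x - conv 0 ω x n|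

/-- Distribution function `F_L` of the Lüroth approximation coefficients. -/
def FL (y : ℝ) : ℝ := (∑ k ∈ Finset.Icc 2 (⌊1/y⌋₊ + 1), y / (k:ℝ)) + 1/((⌊1/y⌋₊ : ℝ) + 1)

/-- Distribution function `F_A` of the alternating Lüroth approximation coefficients. -/
def FA (y : ℝ) : ℝ := (∑ k ∈ Finset.Icc 2 ⌊1/y⌋₊, y / ((k:ℝ) - 1)) + 1/(⌊1/y⌋₊ : ℝ)

/-- A sequence over the alphabet `A` is universal if every finite word over `A` occurs
in it as a consecutive block. -/
def IsUniversal (A : Set (ℕ × ℕ)) (e : ℕ → ℕ × ℕ) : Prop :=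
  ∀ (m : ℕ) (w : Fin m → ℕ × ℕ), (∀ i, w i ∈ A) →
    ∃ k : ℕ, ∀ i : Fin m, e (k + (i : ℕ)) = w i

/-- `c`-Lüroth admissible sequences. -/
def Admissible (c : ℝ) (a : ℕ → ℕ × ℕ) : Prop :=
  (∀ n, (a n).1 ≤ 1 ∧ 2 ≤ (a n).2 ∧ (a n).2 ≤ ⌈1/c⌉₊) ∧
  (∀ k : ℕ, lurothSum (fun n => a (k + n)) ∈ Set.Icc c 1) ∧
  ¬ ∃ (N d : ℕ), 2 ≤ d ∧ d < ⌈1/c⌉₊ ∧ a N = (0, d+1) ∧ ∀ n, N < n → a n = (0, 2)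

/-!
Every map `T_{j,c}` sends `[0,1]` into itself and acts on `(0,1)` by one of the affine maps
`x ↦ k(k-1)x - (k-1)` or `x ↦ 1 - k(k-1)x + (k-1)` with `k ∈ ℤ`, or sends `x` to `0` or `1`.
Hence if `x = p/D` then every iterate `T_ω^n x` lies in the finite set `{0, 1/D, …, D/D}`,
and by pigeonhole two iterates coincide.
-/

lemma TL_mem_Icc {x : ℝ} (hx : x ∈ Icc (0:ℝ) 1) : TL x ∈ Icc (0:ℝ) 1 := by
  unfold TL
  split_ifs with h0 h1
  · simp
  · simp
  set k : ℝ := ((⌈1/x⌉ : ℤ) : ℝ)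
  have hx0 : 0 < x := lt_of_le_of_ne hx.1 (Ne.symm h0)
  have hx1 : x < 1 := lt_of_le_of_ne hx.2 h1
  have hk_ge : 1/x ≤ k := Int.le_ceil _
  have hk_lt : k - 1 < 1/x := by linarith [Int.ceil_lt_add_one (1/x)]
  have hkx : 1 ≤ k * x := by rwa [div_le_iff₀ hx0] at hk_ge
  have hk1x : (k - 1) * x < 1 := by rwa [lt_div_iff₀ hx0] at hk_lt
  have hk1 : 1 < k := lt_of_lt_of_le (by rwa [lt_div_iff₀ hx0, one_mul]) hk_ge
  constructor <;> nlinarith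

lemma Tc_mem_Icc (j : Bool) (c : ℝ) {x : ℝ} (hx : x ∈ Icc (0:ℝ) 1) :
    Tc j c x ∈ Icc (0:ℝ) 1 := by
  have hTL := TL_mem_Icc hx
  have hTA : TA x ∈ Icc (0:ℝ) 1 := by
    rw [TA]; exact ⟨by linarith [hTL.2], by linarith [hTL.1]⟩
  unfold Tc
  split_ifs
  · exact ⟨zero_le_one, le_rfl⟩
  · exact ⟨zero_le_one, le_rfl⟩
  · exact hTA
  · exact hTL

section Denominator

variable {D : ℤ} {x : ℝ}

lemma exists_int_TL_mul (hx : ∃ p : ℤ, x * D = p) : ∃ p : ℤ, TL x * D = p := by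
  obtain ⟨p, hp⟩ := hx
  unfold TL
  split_ifs
  · exact ⟨0, by simp⟩
  · exact ⟨D, by simp⟩
  · exact ⟨⌈1/x⌉ * (⌈1/x⌉ - 1) * p - (⌈1/x⌉ - 1) * D, by push_cast; rw [← hp]; ring⟩

lemma exists_int_Tc_mul (j : Bool) (c : ℝ) (hx : ∃ p : ℤ, x * D = p) :
    ∃ p : ℤ, Tc j c x * D = p := by
  obtain ⟨p, hp⟩ := exists_int_TL_mul hx
  have hTA : ∃ p : ℤ, TA x * D = p := ⟨D - p, by rw [TA, sub_mul, one_mul, hp]; push_cast; rfl⟩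
  unfold Tc
  split_ifs <;> first | exact ⟨D, one_mul _⟩ | exact hTA | exact ⟨p, hp⟩

end Denominator

def gridPoints (D : ℤ) : Set ℝ := {y | y ∈ Icc (0:ℝ) 1 ∧ ∃ p : ℤ, y * D = p}

lemma Tom_mem_gridPoints (c : ℝ) (ω : ℕ → Bool) {D : ℤ} {x : ℝ} (hx : x ∈ gridPoints D)
    (n : ℕ) : Tom c ω n x ∈ gridPoints D := by
  induction n with
  | zero => exact hx
  | succ n ih => exact ⟨Tc_mem_Icc _ _ ih.1, exists_int_Tc_mul _ _ ih.2⟩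

lemma finite_gridPoints {D : ℤ} (hD : 0 < D) : (gridPoints D).Finite := by
  refine ((Set.finite_Icc (0:ℤ) D).image fun p : ℤ => (p : ℝ) / D).subset ?_
  rintro y ⟨⟨hy0, hy1⟩, p, hp⟩
  have hD' : (0:ℝ) < D := Int.cast_pos.mpr hD
  refine ⟨p, ⟨?_, ?_⟩, by simp only [← hp, mul_div_cancel_right₀ _ hD'.ne']⟩
  · exact_mod_cast hp ▸ mul_nonneg hy0 hD'.le
  · exact_mod_cast hp ▸ (mul_le_of_le_one_left hD'.le hy1)

/-- every rational `x ∈ [c,1]` is a returning point for the random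
`c`-Lüroth transformation. -/
theorem rational_is_returning (c : ℝ) (hc : c ∈ Set.Icc (0:ℝ) (1/2))
    (x : ℝ) (hx : x ∈ Set.Icc c 1) (hxq : ∃ q : ℚ, (q : ℝ) = x) (ω : ℕ → Bool) :
    ∃ n r : ℕ, 1 ≤ r ∧ Tom c ω n x = Tom c ω (n + r) x := by
  obtain ⟨q, rfl⟩ := hxq
  have hq : (q : ℝ) ∈ gridPoints q.den :=
    ⟨⟨hc.1.trans hx.1, hx.2⟩, q.num, by push_cast; exact_mod_cast Rat.mul_den_eq_num q⟩
  obtain ⟨m, n, hmn, heq⟩ := Set.Finite.exists_lt_map_eq_of_forall_mem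
    (Tom_mem_gridPoints c ω hq) (finite_gridPoints (by exact_mod_cast q.pos))
  exact ⟨m, n - m, Nat.le_sub_of_add_le' hmn, by rwa [Nat.add_sub_cancel' hmn.le]⟩
end
end

section
/- Let c ∈ [0,1/2] and x ∈ ℚ ∩ [c,1]. Suppose there exists y ∈ [c,1] such that x admits two loops u₁ and u₂ at y that are not equivalent. Then the set of c-Lüroth expansions of x (i.e. the set of sequences ((s_n(ω,x), d_n(ω,x)))_{n≥1} over ω ∈ {0,1}^ℕ) that are NOT ultimately periodic is uncountable, while the set of c-Lüroth expansions of x that ARE ultimately periodic is countable. -/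
open MeasureTheory Filter Set
open scoped Classical ENNReal

noncomputable section

/-!
On `[c, 1]` the maps `T_{0,c}` and `T_{1,c}` differ only where the sign tells them apart, so an
expansion of a point determines its orbit. Repeating the two loop words up to the common length
`r₁ r₂` gives two paths from `y` back to `y` whose sign–digit blocks differ: equal blocks would force
equal orbits, equal first return times, and equivalent loops. Reaching `y` from `x` and then
following these two blocks in the order dictated by an arbitrary `β ∈ {0,1}^ℕ` embeds `{0,1}^ℕ`
into the expansions of `x`. An ultimately periodic sequence is determined by finitely many of its
terms and two numbers, so there are only countably many of them.
-/

section Dynamics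

variable {c x y : ℝ}

lemma Tom_succ (ω : ℕ → Bool) (n : ℕ) (x : ℝ) :
    Tom c ω (n + 1) x = Tc (ω n) c (Tom c ω n x) := rfl

lemma Tom_congr {ω ω' : ℕ → Bool} {n : ℕ} (h : ∀ i < n, ω i = ω' i) :
    Tom c ω n x = Tom c ω' n x := by
  induction n with
  | zero => rfl
  | succ n ih =>
    rw [Tom_succ, Tom_succ, ih fun i hi => h i (by omega), h n n.lt_succ_self]

lemma Tom_add (ω : ℕ → Bool) (n m : ℕ) :
    Tom c ω (n + m) x = Tom c (fun i => ω (n + i)) m (Tom c ω n x) := by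
  induction m with
  | zero => rfl
  | succ m ih => rw [← add_assoc, Tom_succ, ih, Tom_succ]

lemma expansion_add (ω : ℕ → Bool) (n m : ℕ) :
    expansion c ω x (n + m) = expansion c (fun i => ω (n + i)) (Tom c ω n x) m := by
  simp only [expansion, sgn, dig, Tom_add]

lemma expansion_congr {ω ω' : ℕ → Bool} {n : ℕ} (h : ∀ i ≤ n, ω i = ω' i) :
    expansion c ω x n = expansion c ω' x n := by
  simp only [expansion, sgn, dig, Tom_congr fun i hi => h i hi.le, h n le_rfl]

section Digits

variable {t : ℝ} {n : ℕ}

lemma ceil_one_div_eq_iff (ht : 0 < t) (hn : 2 ≤ n) :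
    ⌈1 / t⌉ = (n : ℤ) ↔ 1 / (n : ℝ) ≤ t ∧ t < 1 / ((n : ℝ) - 1) := by
  have hn' : (2 : ℝ) ≤ n := by exact_mod_cast hn
  rw [Int.ceil_eq_iff, and_comm, Int.cast_natCast, one_div_le ht (by linarith),
    lt_one_div (by linarith) ht]

lemma exists_ceil_one_div_eq (ht0 : 0 < t) (ht1 : t < 1) :
    ∃ n : ℕ, 2 ≤ n ∧ ⌈1 / t⌉ = (n : ℤ) := by
  have : 1 < ⌈1 / t⌉ := Int.lt_ceil.2 (by rw [Int.cast_one, lt_one_div one_pos ht0]; simpa)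
  exact ⟨⌈1 / t⌉.toNat, by omega, by omega⟩

lemma TL_eq (ht0 : 0 < t) (ht1 : t ≠ 1) (hn : ⌈1 / t⌉ = (n : ℤ)) :
    TL t = n * (n - 1) * t - (n - 1) := by
  rw [TL, if_neg ht0.ne', if_neg ht1, hn, Int.cast_natCast]

lemma zp_eq (hn : 2 ≤ n) : zp c n = (n - 1 + c) / (n * (n - 1)) := by
  have hn' : (2 : ℝ) ≤ n := by exact_mod_cast hn
  rw [zp]
  field_simp [show (n : ℝ) - 1 ≠ 0 by linarith]

lemma zm_sub_one_eq (hn : 2 ≤ n) : zm c (n - 1) = (n - c) / (n * (n - 1)) := by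
  have hn' : (2 : ℝ) ≤ n := by exact_mod_cast hn
  rw [zm, Nat.cast_sub (by omega), Nat.cast_one, sub_add_cancel]
  field_simp [show (n : ℝ) - 1 ≠ 0 by linarith]

lemma one_div_add_one_le_zm (hc : c ≤ 1) (hn : 1 ≤ n) : 1 / ((n : ℝ) + 1) ≤ zm c n := by
  have h := zm_sub_one_eq (c := c) (n := n + 1) (by omega)
  rw [Nat.add_sub_cancel, Nat.cast_succ, add_sub_cancel_right] at h
  have hn' : (1 : ℝ) ≤ n := by exact_mod_cast hn
  rw [h, div_le_div_iff₀ (by linarith) (by positivity)]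
  nlinarith

lemma zp_le_one_div_sub_one (hc : c ≤ 1) (hn : 2 ≤ n) : zp c n ≤ 1 / ((n : ℝ) - 1) := by
  have hn' : (2 : ℝ) ≤ n := by exact_mod_cast hn
  rw [zp_eq hn, div_le_div_iff₀ (by nlinarith) (by linarith)]
  nlinarith

lemma zm_sub_one_lt_one_div_sub_one (hc : 0 < c) (hn : 2 ≤ n) :
    zm c (n - 1) < 1 / ((n : ℝ) - 1) := by
  have hn' : (2 : ℝ) ≤ n := by exact_mod_cast hn
  rw [zm_sub_one_eq hn, div_lt_div_iff₀ (by nlinarith) (by linarith)]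
  nlinarith

lemma zp_le_zm_sub_one (hc : c ≤ 1 / 2) (hn : 2 ≤ n) : zp c n ≤ zm c (n - 1) := by
  have hn' : (2 : ℝ) ≤ n := by exact_mod_cast hn
  rw [zp_eq hn, zm_sub_one_eq hn]
  gcongr
  · nlinarith
  · linarith

end Digits

section Maps

variable {t : ℝ} {n : ℕ}

lemma TL_mem_Icc_s2 (ht0 : 0 < t) (ht1 : t ≠ 1) (hn2 : 2 ≤ n) (hn : ⌈1 / t⌉ = (n : ℤ))
    (h : zp c n ≤ t) : TL t ∈ Icc c 1 := by
  have hn' : (2 : ℝ) ≤ n := by exact_mod_cast hn2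
  have ht : t * (n - 1) < 1 :=
    (lt_div_iff₀ (by linarith)).1 ((ceil_one_div_eq_iff ht0 hn2).1 hn).2
  rw [zp_eq hn2, div_le_iff₀ (by nlinarith)] at h
  rw [TL_eq ht0 ht1 hn]
  constructor <;> nlinarith

lemma TA_mem_Icc (ht0 : 0 < t) (ht1 : t ≠ 1) (hn2 : 2 ≤ n) (hn : ⌈1 / t⌉ = (n : ℤ))
    (h : t ≤ zm c (n - 1)) : TA t ∈ Icc c 1 := by
  have hn' : (2 : ℝ) ≤ n := by exact_mod_cast hn2
  have ht : 1 ≤ t * n := (div_le_iff₀ (by linarith)).1 ((ceil_one_div_eq_iff ht0 hn2).1 hn).1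
  rw [zm_sub_one_eq hn2, le_div_iff₀ (by nlinarith)] at h
  rw [TA, TL_eq ht0 ht1 hn]
  constructor <;> nlinarith

lemma Tc_eq_ite (hc0 : 0 < c) (hc1 : c ≤ 1) (ht0 : 0 < t) (ht1 : t ≠ 1) (hn2 : 2 ≤ n)
    (hn : ⌈1 / t⌉ = (n : ℤ)) (b : Bool) :
    Tc b c t = if (b = false ∧ t < zp c n) ∨ (b = true ∧ t ≤ zm c (n - 1)) then TA t else TL t := by
  have hdigit {m : ℕ} (hm : 2 ≤ m) (hm1 : 1 / (m : ℝ) ≤ t) (hm2 : t < 1 / ((m : ℝ) - 1)) :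
      m = n := by
    have := (ceil_one_div_eq_iff ht0 hm).2 ⟨hm1, hm2⟩
    omega
  have hzp : (∃ m : ℕ, 2 ≤ m ∧ 1 / (m : ℝ) ≤ t ∧ t < zp c m) ↔ t < zp c n :=
    ⟨fun ⟨m, hm, hm1, hm2⟩ =>
      hdigit hm hm1 (hm2.trans_le (zp_le_one_div_sub_one hc1 hm)) ▸ hm2,
     fun h => ⟨n, hn2, ((ceil_one_div_eq_iff ht0 hn2).1 hn).1, h⟩⟩
  have hzm : (∃ m : ℕ, 2 ≤ m ∧ 1 / (m : ℝ) ≤ t ∧ t ≤ zm c (m - 1)) ↔ t ≤ zm c (n - 1) :=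
    ⟨fun ⟨m, hm, hm1, hm2⟩ =>
      hdigit hm hm1 (hm2.trans_lt (zm_sub_one_lt_one_div_sub_one hc0 hm)) ▸ hm2,
     fun h => ⟨n, hn2, ((ceil_one_div_eq_iff ht0 hn2).1 hn).1, h⟩⟩
  rw [Tc, if_neg fun h => hc0.ne' h.1, if_neg ht1, hzp, hzm]

lemma Tc_mem_Icc_s2 (hc0 : 0 ≤ c) (hc2 : c ≤ 1 / 2) (ht : t ∈ Icc c 1) (b : Bool) :
    Tc b c t ∈ Icc c 1 := by
  have hone : (1 : ℝ) ∈ Icc c 1 := ⟨by linarith, le_rfl⟩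
  by_cases hsp : c = 0 ∧ (t = 0 ∨ ∃ n : ℕ, 2 ≤ n ∧ t = 1 / (n : ℝ))
  · rwa [Tc, if_pos hsp]
  by_cases ht1 : t = 1
  · rwa [Tc, if_neg hsp, if_pos ht1]
  have ht0 : 0 < t := by
    rcases hc0.lt_or_eq with hc | rfl
    · exact hc.trans_le ht.1
    · exact ht.1.lt_of_ne' fun h => hsp ⟨rfl, Or.inl h⟩
  obtain ⟨n, hn2, hn⟩ := exists_ceil_one_div_eq ht0 (ht.2.lt_of_ne ht1)
  obtain ⟨hn1, hn1'⟩ := (ceil_one_div_eq_iff ht0 hn2).1 hn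
  rcases hc0.lt_or_eq with hc | rfl
  · rw [Tc_eq_ite hc (by linarith) ht0 ht1 hn2 hn]
    split_ifs with h
    · refine TA_mem_Icc ht0 ht1 hn2 hn ?_
      rcases h with ⟨-, h⟩ | ⟨-, h⟩
      · exact h.le.trans (zp_le_zm_sub_one hc2 hn2)
      · exact h
    · refine TL_mem_Icc_s2 ht0 ht1 hn2 hn ?_
      push Not at h
      cases b
      · exact h.1 rfl
      · exact (zp_le_zm_sub_one hc2 hn2).trans (h.2 rfl).le
  · have hTA : TA t ∈ Icc 0 1 := TA_mem_Icc ht0 ht1 hn2 hn <| by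
      rw [zm_sub_one_eq hn2, sub_zero, ← div_div, div_self (by positivity)]
      exact hn1'.le
    have hTL : TL t ∈ Icc 0 1 := TL_mem_Icc_s2 ht0 ht1 hn2 hn <| by simpa [zp] using hn1
    rw [Tc, if_neg hsp, if_neg ht1]
    split_ifs <;> assumption

def sgnAt (c : ℝ) (b : Bool) (t : ℝ) : ℕ :=
  if c = 0 then (if b then 1 else 0)
  else if (b = false ∧ t ∈ SwitchS c) ∨
          (∃ d : ℕ, 1 ≤ d ∧ zm c d < t ∧ t < 1 / (d : ℝ)) ∨ t = 1 then 0
  else 1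

lemma sgn_eq_sgnAt (ω : ℕ → Bool) (n : ℕ) : sgn c ω x n = sgnAt c (ω n) (Tom c ω n x) := rfl

lemma sgnAt_false_ne_true {t : ℝ} {n : ℕ} (hc0 : 0 < c) (hc1 : c ≤ 1) (ht : t ∈ Icc c 1)
    (ht1 : t ≠ 1) (hn2 : 2 ≤ n) (hn : ⌈1 / t⌉ = (n : ℤ)) (hp : zp c n ≤ t)
    (hm : t ≤ zm c (n - 1)) : sgnAt c false t ≠ sgnAt c true t := by
  have ht0 : 0 < t := hc0.trans_le ht.1
  have h0 : sgnAt c false t = 0 := by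
    rw [sgnAt, if_neg hc0.ne', if_pos (Or.inl ⟨rfl, ht, n, hn2, hp, hm⟩)]
  have h1 : sgnAt c true t = 1 := by
    rw [sgnAt, if_neg hc0.ne', if_neg]
    rintro (⟨h, -⟩ | ⟨d, hd, hdt, htd⟩ | h)
    · exact Bool.noConfusion h
    · have hd' : ⌈1 / t⌉ = ((d + 1 : ℕ) : ℤ) := by
        refine (ceil_one_div_eq_iff ht0 (by omega)).2 ⟨?_, ?_⟩
        · exact_mod_cast (one_div_add_one_le_zm hc1 hd).trans hdt.le
        · rwa [Nat.cast_succ, add_sub_cancel_right]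
      obtain rfl : n = d + 1 := by omega
      exact hm.not_gt hdt
    · exact ht1 h
  omega

/-- `T_{0,c}` and `T_{1,c}` differ only on the switch region, where the sign records which one is
applied. -/
lemma Tc_eq_of_sgnAt_eq {t : ℝ} {b b' : Bool} (hc0 : 0 ≤ c) (hc2 : c ≤ 1 / 2)
    (ht : t ∈ Icc c 1) (h : sgnAt c b t = sgnAt c b' t) : Tc b c t = Tc b' c t := by
  rcases hc0.lt_or_eq with hc | rfl
  swap
  · cases b <;> cases b' <;> simp_all [sgnAt]
  by_cases ht1 : t = 1
  · simp [Tc, ht1]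
  have ht0 : 0 < t := hc.trans_le ht.1
  obtain ⟨n, hn2, hn⟩ := exists_ceil_one_div_eq ht0 (ht.2.lt_of_ne ht1)
  have hzz := zp_le_zm_sub_one hc2 hn2
  rw [Tc_eq_ite hc (by linarith) ht0 ht1 hn2 hn, Tc_eq_ite hc (by linarith) ht0 ht1 hn2 hn]
  rcases lt_or_ge t (zp c n) with hp | hp
  · have (b : Bool) : (b = false ∧ t < zp c n) ∨ (b = true ∧ t ≤ zm c (n - 1)) := by
      cases b
      · exact Or.inl ⟨rfl, hp⟩
      · exact Or.inr ⟨rfl, hp.le.trans hzz⟩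
    rw [if_pos (this b), if_pos (this b')]
  rcases le_or_gt t (zm c (n - 1)) with hm | hm
  · have := sgnAt_false_ne_true hc (by linarith) ht ht1 hn2 hn hp hm
    cases b <;> cases b' <;> simp_all
  · have (b : Bool) : ¬((b = false ∧ t < zp c n) ∨ (b = true ∧ t ≤ zm c (n - 1))) := by
      rintro (⟨-, h⟩ | ⟨-, h⟩) <;> linarith
    rw [if_neg (this b), if_neg (this b')]

lemma Tom_mem_Icc (hc0 : 0 ≤ c) (hc2 : c ≤ 1 / 2) (hx : x ∈ Icc c 1) (ω : ℕ → Bool) (n : ℕ) :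
    Tom c ω n x ∈ Icc c 1 := by
  induction n with
  | zero => exact hx
  | succ n ih => exact Tc_mem_Icc_s2 hc0 hc2 ih (ω n)

lemma Tom_eq_of_sgn_eq (hc0 : 0 ≤ c) (hc2 : c ≤ 1 / 2) (hy : y ∈ Icc c 1) {ω ω' : ℕ → Bool}
    {m : ℕ} (h : ∀ j < m, sgn c ω y j = sgn c ω' y j) : ∀ j ≤ m, Tom c ω j y = Tom c ω' j y := by
  intro j hj
  induction j with
  | zero => rfl
  | succ j ih =>
    have hj' := ih (by omega)
    have hs := h j hj
    rw [sgn_eq_sgnAt, sgn_eq_sgnAt, ← hj'] at hs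
    rw [Tom_succ, Tom_succ, ← hj', Tc_eq_of_sgnAt_eq hc0 hc2 (Tom_mem_Icc hc0 hc2 hy ω j) hs]

end Maps

section Loops

/-- The word `ω_{n+1} ⋯ ω_{n+r}` is a loop for `x` at `y`. -/
def IsLoop (c x y : ℝ) (ω : ℕ → Bool) (n r : ℕ) : Prop :=
  1 ≤ r ∧ Tom c ω n x = y ∧ Tom c ω (n + r) x = y ∧ ∀ j, 0 < j → j < r → Tom c ω (n + j) x ≠ y

def loopWord (ω : ℕ → Bool) (n r : ℕ) : ℕ → Bool := fun j => ω (n + j % r)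

variable {ω : ℕ → Bool} {n r : ℕ}

lemma loopWord_periodic : Function.Periodic (loopWord ω n r) r := fun j => by
  simp [loopWord]

lemma Tom_loopWord {j : ℕ} (hj : j ≤ r) :
    Tom c (loopWord ω n r) j (Tom c ω n x) = Tom c ω (n + j) x := by
  rw [Tom_add]
  exact Tom_congr fun i hi => by rw [loopWord, Nat.mod_eq_of_lt (by omega)]

lemma expansion_loopWord {j : ℕ} (hj : j < r) :
    expansion c (loopWord ω n r) (Tom c ω n x) j = expansion c ω x (n + j) := by
  rw [expansion_add]
  exact expansion_congr fun i hi => by rw [loopWord, Nat.mod_eq_of_lt (by omega)]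

lemma Tom_mul_eq_of_periodic {u : ℕ → Bool} (hu : Function.Periodic u r) (hy : Tom c u r y = y)
    (q : ℕ) : Tom c u (r * q) y = y := by
  induction q with
  | zero => rfl
  | succ q ih =>
    rw [mul_add_one, Tom_add, ih]
    convert hy using 2
    funext i
    rw [add_comm, mul_comm]
    exact_mod_cast hu.nat_mul q i

namespace IsLoop

lemma Tom_loopWord_eq (h : IsLoop c x y ω n r) : Tom c (loopWord ω n r) r y = y := by
  rw [← h.2.1, Tom_loopWord le_rfl, h.2.2.1, h.2.1]

lemma Tom_loopWord_mul (h : IsLoop c x y ω n r) (q : ℕ) : Tom c (loopWord ω n r) (r * q) y = y :=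
  Tom_mul_eq_of_periodic loopWord_periodic h.Tom_loopWord_eq q

lemma le_of_Tom_loopWord_eq (h : IsLoop c x y ω n r) {s : ℕ} (hs : 0 < s)
    (hret : Tom c (loopWord ω n r) s y = y) : r ≤ s := by
  by_contra! hsr
  exact h.2.2.2 s hs hsr (by rwa [← h.2.1, Tom_loopWord hsr.le, h.2.1] at hret)

end IsLoop

/-- Otherwise the signs, hence the orbits, hence the first return times of the two loops agree. -/
lemma exists_expansion_loopWord_ne (hc0 : 0 ≤ c) (hc2 : c ≤ 1 / 2) (hy : y ∈ Icc c 1)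
    {ω₁ ω₂ : ℕ → Bool} {n₁ n₂ r₁ r₂ : ℕ} (h₁ : IsLoop c x y ω₁ n₁ r₁) (h₂ : IsLoop c x y ω₂ n₂ r₂)
    (hne : ¬ (r₁ = r₂ ∧ ∀ j < r₁, expansion c ω₁ x (n₁ + j) = expansion c ω₂ x (n₂ + j))) :
    ∃ j < r₁ * r₂, expansion c (loopWord ω₁ n₁ r₁) y j ≠ expansion c (loopWord ω₂ n₂ r₂) y j := by
  by_contra! h
  have horbit := Tom_eq_of_sgn_eq hc0 hc2 hy fun j hj => congrArg Prod.fst (h j hj)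
  have hr₁ : r₁ ≤ r₁ * r₂ := Nat.le_mul_of_pos_right r₁ h₂.1
  have hr₂ : r₂ ≤ r₁ * r₂ := Nat.le_mul_of_pos_left r₂ h₁.1
  have hr : r₁ = r₂ := le_antisymm
    (h₁.le_of_Tom_loopWord_eq h₂.1 (by rw [horbit r₂ hr₂, h₂.Tom_loopWord_eq]))
    (h₂.le_of_Tom_loopWord_eq h₁.1 (by rw [← horbit r₁ hr₁, h₁.Tom_loopWord_eq]))
  refine hne ⟨hr, fun j hj => ?_⟩
  rw [← expansion_loopWord hj, ← expansion_loopWord (hr ▸ hj), h₁.2.1, h₂.2.1]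
  exact h j (hj.trans_le hr₁)

end Loops

section Concatenation

def concatBlocks (L : ℕ) (p : Bool → ℕ → Bool) (β : ℕ → Bool) : ℕ → Bool :=
  fun k => p (β (k / L)) (k % L)

def prepend (n : ℕ) (ω η : ℕ → Bool) : ℕ → Bool := fun k => if k < n then ω k else η (k - n)

variable {L : ℕ} {p : Bool → ℕ → Bool} {β : ℕ → Bool}

lemma concatBlocks_mul_add {k i : ℕ} (hi : i < L) : concatBlocks L p β (L * k + i) = p (β k) i := by
  rw [concatBlocks, Nat.mul_add_div (by omega), Nat.div_eq_of_lt hi, add_zero, Nat.mul_add_mod,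
    Nat.mod_eq_of_lt hi]

lemma Tom_concatBlocks_mul (hp : ∀ b, Tom c (p b) L y = y) (k : ℕ) :
    Tom c (concatBlocks L p β) (L * k) y = y := by
  induction k with
  | zero => rfl
  | succ k ih =>
    rw [mul_add_one, Tom_add, ih]
    exact (Tom_congr fun i hi => concatBlocks_mul_add hi).trans (hp (β k))

lemma expansion_concatBlocks (hp : ∀ b, Tom c (p b) L y = y) {k i : ℕ} (hi : i < L) :
    expansion c (concatBlocks L p β) y (L * k + i) = expansion c (p (β k)) y i := by
  rw [expansion_add, Tom_concatBlocks_mul hp]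
  exact expansion_congr fun j hj => concatBlocks_mul_add (by omega)

lemma injective_expansion_concatBlocks (hp : ∀ b, Tom c (p b) L y = y) {j : ℕ} (hj : j < L)
    (hne : expansion c (p false) y j ≠ expansion c (p true) y j) :
    Function.Injective fun β => expansion c (concatBlocks L p β) y := by
  intro β β' h
  funext k
  have hk := congrFun h (L * k + j)
  simp only [expansion_concatBlocks hp hj] at hk
  revert hk
  cases β k <;> cases β' k <;> simp [hne, hne.symm]

lemma injective_expansion_prepend {α : Type*} {ω : ℕ → Bool} {n : ℕ} {η : α → ℕ → Bool}
    (hη : Function.Injective fun a => expansion c (η a) (Tom c ω n x)) :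
    Function.Injective fun a => expansion c (prepend n ω (η a)) x := by
  have hTom (a : α) : Tom c (prepend n ω (η a)) n x = Tom c ω n x :=
    Tom_congr fun i hi => if_pos hi
  have htail (a : α) : (fun i => prepend n ω (η a) (n + i)) = η a := by
    funext i
    simp [prepend]
  intro a a' h
  refine hη (funext fun m => ?_)
  simpa only [expansion_add, hTom, htail] using congrFun h (n + m)

end Concatenation

end Dynamics

section Periodicity

lemma eq_of_periodic_of_eq_below {α : Type*} {a a' : ℕ → α} {N r : ℕ} (hr : 1 ≤ r)
    (ha : ∀ n, N ≤ n → a (n + r) = a n) (ha' : ∀ n, N ≤ n → a' (n + r) = a' n)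
    (h : ∀ n < N + r, a n = a' n) : a = a' := by
  funext n
  induction n using Nat.strong_induction_on with
  | _ n ih =>
    by_cases hn : n < N + r
    · exact h n hn
    · obtain ⟨m, rfl⟩ : ∃ m, n = m + r := ⟨n - r, by omega⟩
      rw [ha m (by omega), ha' m (by omega), ih m (by omega)]

lemma countable_setOf_ultimatelyPeriodic (α : Type*) [Countable α] :
    {a : ℕ → α | UltimatelyPeriodic a}.Countable := by
  have : {a : ℕ → α | UltimatelyPeriodic a} =
      ⋃ N : ℕ, ⋃ r : ℕ, {a | 1 ≤ r ∧ ∀ n, N ≤ n → a (n + r) = a n} := by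
    ext a
    simp [UltimatelyPeriodic]
  rw [this]
  refine Set.countable_iUnion fun N => Set.countable_iUnion fun r => ?_
  refine (Set.mapsTo_univ (fun a (i : Fin (N + r)) => a i) _).countable_of_injOn ?_
    Set.countable_univ
  intro a ha a' ha' h
  exact eq_of_periodic_of_eq_below ha.1 ha.2 ha'.2 fun n hn => congrFun h ⟨n, hn⟩

instance : Uncountable (ℕ → Bool) := by
  rw [← Cardinal.aleph0_lt_mk_iff, ← Cardinal.power_def, Cardinal.mk_bool, Cardinal.mk_nat]
  exact Cardinal.cantor _

lemma not_countable_setOf_not_ultimatelyPeriodic {α : Type*} [Countable α]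
    {f : (ℕ → Bool) → ℕ → α} (hf : Function.Injective f) :
    ¬ {e | e ∈ range f ∧ ¬ UltimatelyPeriodic e}.Countable := by
  intro h
  have hrange : (range f).Countable := by
    refine (h.union (countable_setOf_ultimatelyPeriodic α)).mono fun e he => ?_
    by_cases hp : UltimatelyPeriodic e
    · exact Or.inr hp
    · exact Or.inl ⟨he, hp⟩
  exact Set.not_countable_univ (MapsTo.countable_of_injOn (fun β _ => mem_range_self β)
    hf.injOn hrange)

end Periodicity

theorem two_loops_uncountably_many_expansions_general (c : ℝ) (hc : c ∈ Set.Icc (0:ℝ) (1/2))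
    (x : ℝ)
    (hloops : ∃ y ∈ Set.Icc c 1, ∃ (ω₁ ω₂ : ℕ → Bool) (n₁ n₂ r₁ r₂ : ℕ),
      1 ≤ r₁ ∧ 1 ≤ r₂ ∧
      -- `ω₁` realizes a loop of length `r₁` for `x` at `y` starting at time `n₁`
      Tom c ω₁ n₁ x = y ∧ Tom c ω₁ (n₁ + r₁) x = y ∧
        (∀ j, 0 < j → j < r₁ → Tom c ω₁ (n₁ + j) x ≠ y) ∧
      -- `ω₂` realizes a loop of length `r₂` for `x` at `y` starting at time `n₂`
      Tom c ω₂ n₂ x = y ∧ Tom c ω₂ (n₂ + r₂) x = y ∧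
        (∀ j, 0 < j → j < r₂ → Tom c ω₂ (n₂ + j) x ≠ y) ∧
      -- the two loops are not equivalent: their sign-digit blocks do not coincide
      ¬ (r₁ = r₂ ∧ ∀ j < r₁, expansion c ω₁ x (n₁ + j) = expansion c ω₂ x (n₂ + j))) :
    ¬ Set.Countable {e : ℕ → ℕ × ℕ |
        (∃ ω : ℕ → Bool, expansion c ω x = e) ∧ ¬ UltimatelyPeriodic e} ∧
    Set.Countable {e : ℕ → ℕ × ℕ |
        (∃ ω : ℕ → Bool, expansion c ω x = e) ∧ UltimatelyPeriodic e} := by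
  obtain ⟨y, hy, ω₁, ω₂, n₁, n₂, r₁, r₂, hr₁, hr₂, h₁, h₁', h₁'', h₂, h₂', h₂'', hne⟩ := hloops
  have hloop₁ : IsLoop c x y ω₁ n₁ r₁ := ⟨hr₁, h₁, h₁', h₁''⟩
  have hloop₂ : IsLoop c x y ω₂ n₂ r₂ := ⟨hr₂, h₂, h₂', h₂''⟩
  obtain ⟨j, hj, hdiff⟩ := exists_expansion_loopWord_ne hc.1 hc.2 hy hloop₁ hloop₂ hne
  let p : Bool → ℕ → Bool := fun b => if b then loopWord ω₂ n₂ r₂ else loopWord ω₁ n₁ r₁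
  have hp : ∀ b, Tom c (p b) (r₁ * r₂) y = y := by
    rintro (_ | _)
    · exact hloop₁.Tom_loopWord_mul r₂
    · exact mul_comm r₂ r₁ ▸ hloop₂.Tom_loopWord_mul r₁
  have hinj : Function.Injective fun β => expansion c (prepend n₁ ω₁ (concatBlocks (r₁ * r₂) p β)) x :=
    injective_expansion_prepend (h₁ ▸ injective_expansion_concatBlocks hp hj hdiff)
  refine ⟨fun hcount => not_countable_setOf_not_ultimatelyPeriodic hinj (hcount.mono ?_),
    (countable_setOf_ultimatelyPeriodic _).mono fun e he => he.2⟩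
  rintro e ⟨⟨β, rfl⟩, he⟩
  exact ⟨⟨_, rfl⟩, he⟩

/-- if a rational `x ∈ [c,1]` admits two non-equivalent loops at some
`y ∈ [c,1]`, then `x` has uncountably many non-ultimately-periodic `c`-Lüroth
expansions and countably many ultimately periodic ones. -/
theorem two_loops_uncountably_many_expansions (c : ℝ) (hc : c ∈ Set.Icc (0:ℝ) (1/2))
    (x : ℝ) (hx : x ∈ Set.Icc c 1) (hxq : ∃ q : ℚ, (q : ℝ) = x)
    (hloops : ∃ y ∈ Set.Icc c 1, ∃ (ω₁ ω₂ : ℕ → Bool) (n₁ n₂ r₁ r₂ : ℕ),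
      1 ≤ r₁ ∧ 1 ≤ r₂ ∧
      -- `ω₁` realizes a loop of length `r₁` for `x` at `y` starting at time `n₁`
      Tom c ω₁ n₁ x = y ∧ Tom c ω₁ (n₁ + r₁) x = y ∧
        (∀ j, 0 < j → j < r₁ → Tom c ω₁ (n₁ + j) x ≠ y) ∧
      -- `ω₂` realizes a loop of length `r₂` for `x` at `y` starting at time `n₂`
      Tom c ω₂ n₂ x = y ∧ Tom c ω₂ (n₂ + r₂) x = y ∧
        (∀ j, 0 < j → j < r₂ → Tom c ω₂ (n₂ + j) x ≠ y) ∧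
      -- the two loops are not equivalent: their sign-digit blocks do not coincide
      ¬ (r₁ = r₂ ∧ ∀ j < r₁, expansion c ω₁ x (n₁ + j) = expansion c ω₂ x (n₂ + j))) :
    ¬ Set.Countable {e : ℕ → ℕ × ℕ |
        (∃ ω : ℕ → Bool, expansion c ω x = e) ∧ ¬ UltimatelyPeriodic e} ∧
    Set.Countable {e : ℕ → ℕ × ℕ |
        (∃ ω : ℕ → Bool, expansion c ω x = e) ∧ UltimatelyPeriodic e} :=
  two_loops_uncountably_many_expansions_general c hc x hloops
end
end

section
/- Let c ∈ [0,1/2] and let x ∈ [c,1] be irrational. Then for every ω ∈ {0,1}^ℕ the c-Lüroth expansion ((s_n(ω,x), d_n(ω,x)))_{n≥1} of (ω,x) is not ultimately periodic. -/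
open MeasureTheory Filter Set
open scoped Classical ENNReal

noncomputable section

/-! On an irrational point `y ∈ [c, 1)` with Lüroth digit `d = ⌈1/y⌉`, the map `T_{j,c}` acts
either as `T_L` or as `T_A = 1 - T_L`, and the sign `s` records which; so
`T_{j,c} y = (-1)^s (d(d-1)y - (d-1)) + s` is affine in `y`, with rational coefficients determined
by the expansion entry `(s, d)` and a slope of absolute value `d(d-1) ≥ 2`, and the orbit stays
irrational in `[c, 1)`. If the expansion were periodic from time `N` on with period `r`, the orbits
of `T^N x` and `T^(N+r) x` would follow the same expanding affine maps while staying bounded, so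
they coincide. Then `T^N x` is a fixed point of a rational affine map with slope `≠ 1`, hence
rational. -/

theorem UltimatelyPeriodic.comp {α β : Type*} {a : ℕ → α} (h : UltimatelyPeriodic a)
    (f : α → β) : UltimatelyPeriodic (f ∘ a) := by
  obtain ⟨N, r, hr, hper⟩ := h
  exact ⟨N, r, hr, fun n hn => congrArg f (hper n hn)⟩

section AffineRecurrence

theorem eq_zero_of_expanding_of_bounded {δ : ℕ → ℝ} {K M : ℝ} (hK : 1 < K)
    (hgrow : ∀ n, K * |δ n| ≤ |δ (n + 1)|) (hbdd : ∀ n, |δ n| ≤ M) : δ 0 = 0 := by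
  have hpow : ∀ n, K ^ n * |δ 0| ≤ |δ n| := by
    intro n
    induction n with
    | zero => simp
    | succ n ih =>
      calc K ^ (n + 1) * |δ 0| = K * (K ^ n * |δ 0|) := by ring
        _ ≤ K * |δ n| := by gcongr
        _ ≤ |δ (n + 1)| := hgrow n
  by_contra h
  have hpos : 0 < |δ 0| := abs_pos.2 h
  obtain ⟨n, hn⟩ := pow_unbounded_of_one_lt (M / |δ 0|) hK
  rw [div_lt_iff₀ hpos] at hn
  linarith [(hpow n).trans (hbdd n)]

variable {y : ℕ → ℝ} {a b : ℕ → ℚ}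

theorem exists_eq_prod_mul_add (hrec : ∀ n, y (n + 1) = a n * y n + b n) (m k : ℕ) :
    ∃ β : ℚ, y (m + k) = ((∏ i ∈ Finset.range k, a (m + i) : ℚ) : ℝ) * y m + β := by
  induction k with
  | zero => exact ⟨0, by simp⟩
  | succ k ih =>
    obtain ⟨β, hβ⟩ := ih
    refine ⟨a (m + k) * β + b (m + k), ?_⟩
    rw [← add_assoc, hrec, hβ, Finset.prod_range_succ]
    push_cast
    ring

theorem not_irrational_of_eq_mul_add {t : ℝ} {α β : ℚ} (hα : α ≠ 1)
    (h : t = α * t + β) : ¬ Irrational t := by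
  have hα' : (1 - α : ℝ) ≠ 0 := by exact_mod_cast sub_ne_zero.2 hα.symm
  refine fun ht => ht ⟨β / (1 - α), ?_⟩
  push_cast
  field_simp
  linarith

theorem exists_not_irrational_of_affine_recurrence {K M : ℝ} (hK : 1 < K)
    (ha : ∀ n, K ≤ |(a n : ℝ)|) (hbdd : ∀ n, |y n| ≤ M)
    (hrec : ∀ n, y (n + 1) = a n * y n + b n) (hper : UltimatelyPeriodic fun n => (a n, b n)) :
    ∃ n, ¬ Irrational (y n) := by
  obtain ⟨N, r, hr, hper⟩ := hper
  -- From time `N` on, `y` and its shift by `r` obey the same maps, so their gap expands.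
  have hreturn : y (N + r) = y N := by
    have h := eq_zero_of_expanding_of_bounded (δ := fun k => y (N + k + r) - y (N + k))
      (M := 2 * M) hK ?_ ?_
    · simpa [sub_eq_zero] using h
    · intro k
      obtain ⟨ha', hb'⟩ := Prod.mk.inj (hper (N + k) (by omega))
      rw [show N + (k + 1) + r = N + k + r + 1 by ring, ← add_assoc, hrec, hrec, ha', hb',
        add_sub_add_right_eq_sub, ← mul_sub, abs_mul]
      gcongr
      exact ha _
    · intro k
      linarith [abs_sub (y (N + k + r)) (y (N + k)), hbdd (N + k + r), hbdd (N + k)]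
  obtain ⟨β, hβ⟩ := exists_eq_prod_mul_add hrec N r
  refine ⟨N, not_irrational_of_eq_mul_add (fun h1 => ?_) (hreturn ▸ hβ)⟩
  have hprod : K ^ r ≤ |((∏ i ∈ Finset.range r, a (N + i) : ℚ) : ℝ)| := by
    calc K ^ r = ∏ _i ∈ Finset.range r, K := by simp
      _ ≤ ∏ i ∈ Finset.range r, |(a (N + i) : ℝ)| :=
        Finset.prod_le_prod (fun _ _ => by linarith) fun i _ => ha (N + i)
      _ = _ := by rw [Rat.cast_prod, Finset.abs_prod]
  rw [h1, Rat.cast_one, abs_one] at hprod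
  exact (one_lt_pow₀ hK (by omega)).not_ge hprod

end AffineRecurrence

section Cylinders

/-- The increasing affine bijection of `[1/n, 1/(n-1)]` onto `[0, 1]`, by which `T_L` acts on
that interval. -/
def cylinderMap (n : ℕ) (t : ℝ) : ℝ := n * (n - 1) * t - (n - 1)

def lurothDigit (y : ℝ) : ℕ := (⌈1 / y⌉).toNat

variable {c t y : ℝ} {n : ℕ}

theorem cylinderMap_strictMono (hn : 2 ≤ n) : StrictMono (cylinderMap n) := by
  have hn' : (2 : ℝ) ≤ n := by exact_mod_cast hn
  intro s t hst
  unfold cylinderMap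
  gcongr
  nlinarith

theorem cylinderMap_one_div (hn : 2 ≤ n) : cylinderMap n (1 / n) = 0 := by
  have hn' : (2 : ℝ) ≤ n := by exact_mod_cast hn
  unfold cylinderMap
  field_simp
  ring

theorem cylinderMap_one_div_pred (hn : 2 ≤ n) : cylinderMap n (1 / (n - 1)) = 1 := by
  have hn' : (2 : ℝ) ≤ n := by exact_mod_cast hn
  unfold cylinderMap
  field_simp [show (n : ℝ) - 1 ≠ 0 by linarith]
  ring

theorem cylinderMap_zp (hn : 2 ≤ n) : cylinderMap n (zp c n) = c := by
  have hn' : (2 : ℝ) ≤ n := by exact_mod_cast hn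
  unfold cylinderMap zp
  field_simp [show (n : ℝ) - 1 ≠ 0 by linarith]
  ring

theorem cylinderMap_zm_pred (hn : 2 ≤ n) : cylinderMap n (zm c (n - 1)) = 1 - c := by
  have hn' : (2 : ℝ) ≤ n := by exact_mod_cast hn
  unfold cylinderMap zm
  rw [Nat.cast_sub (by omega), Nat.cast_one]
  field_simp [show (n : ℝ) - 1 ≠ 0 by linarith, show (n : ℝ) ≠ 0 by linarith]
  ring

theorem one_div_le_iff_nonneg_cylinderMap (hn : 2 ≤ n) :
    1 / (n : ℝ) ≤ t ↔ 0 ≤ cylinderMap n t := by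
  rw [← (cylinderMap_strictMono hn).le_iff_le, cylinderMap_one_div hn]

theorem lt_one_div_pred_iff_cylinderMap_lt_one (hn : 2 ≤ n) :
    t < 1 / ((n : ℝ) - 1) ↔ cylinderMap n t < 1 := by
  rw [← (cylinderMap_strictMono hn).lt_iff_lt, cylinderMap_one_div_pred hn]

theorem zp_le_iff_le_cylinderMap (hn : 2 ≤ n) : zp c n ≤ t ↔ c ≤ cylinderMap n t := by
  rw [← (cylinderMap_strictMono hn).le_iff_le, cylinderMap_zp hn]

theorem le_zm_pred_iff_cylinderMap_le (hn : 2 ≤ n) :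
    t ≤ zm c (n - 1) ↔ cylinderMap n t ≤ 1 - c := by
  rw [← (cylinderMap_strictMono hn).le_iff_le, cylinderMap_zm_pred hn]

theorem Irrational.cylinderMap (hy : Irrational y) (n : ℕ) (hn : 2 ≤ n) :
    Irrational (cylinderMap n y) := by
  have hq : ((n : ℚ) * (n - 1)) ≠ 0 := by
    have : (2 : ℚ) ≤ n := by exact_mod_cast hn
    exact mul_ne_zero (by linarith) (by linarith)
  convert (hy.ratCast_mul hq).add_ratCast (-(n - 1 : ℚ)) using 1
  unfold _root_.cylinderMap
  push_cast
  ring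

theorem one_lt_ceil_one_div (h0 : 0 < y) (h1 : y < 1) : 1 < ⌈1 / y⌉ :=
  Int.lt_ceil.2 (by simpa using one_lt_one_div h0 h1)

theorem two_le_lurothDigit (h0 : 0 < y) (h1 : y < 1) : 2 ≤ lurothDigit y := by
  have := one_lt_ceil_one_div h0 h1
  unfold lurothDigit
  omega

theorem natCast_lurothDigit (h0 : 0 < y) (h1 : y < 1) : (lurothDigit y : ℤ) = ⌈1 / y⌉ :=
  Int.toNat_of_nonneg (by linarith [one_lt_ceil_one_div h0 h1])

theorem TL_eq_cylinderMap_lurothDigit (h0 : 0 < y) (h1 : y < 1) :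
    TL y = cylinderMap (lurothDigit y) y := by
  rw [TL, if_neg h0.ne', if_neg h1.ne, ← natCast_lurothDigit h0 h1, cylinderMap,
    Int.cast_natCast]

theorem ceil_one_div_eq_iff_s3 (h0 : 0 < y) (hn : 2 ≤ n) :
    ⌈1 / y⌉ = n ↔ cylinderMap n y ∈ Ico 0 1 := by
  have hn' : (2 : ℝ) ≤ n := by exact_mod_cast hn
  rw [Int.ceil_eq_iff, mem_Ico, ← one_div_le_iff_nonneg_cylinderMap hn,
    ← lt_one_div_pred_iff_cylinderMap_lt_one hn]
  push_cast
  rw [one_div_le h0 (by linarith), lt_one_div (by linarith) h0, and_comm]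

theorem cylinderMap_lurothDigit_mem (h0 : 0 < y) (h1 : y < 1) :
    cylinderMap (lurothDigit y) y ∈ Ico 0 1 :=
  (ceil_one_div_eq_iff_s3 h0 (two_le_lurothDigit h0 h1)).1 (natCast_lurothDigit h0 h1).symm

theorem lurothDigit_eq_of_mem_Icc (hy : Irrational y) (hn : 2 ≤ n)
    (h : cylinderMap n y ∈ Icc 0 1) : lurothDigit y = n := by
  have h0 : 0 < y := by
    have : (0 : ℝ) < 1 / n := by positivity
    exact this.trans_le ((one_div_le_iff_nonneg_cylinderMap hn).2 h.1)
  have hceil := (ceil_one_div_eq_iff_s3 h0 hn).2 ⟨h.1, h.2.lt_of_ne (hy.cylinderMap n hn).ne_one⟩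
  rw [lurothDigit, hceil, Int.toNat_natCast]

theorem exists_iff_lurothDigit (hy : Irrational y) (h0 : 0 < y) (h1 : y < 1) {P : ℕ → Prop}
    (hP : ∀ n, 2 ≤ n → P n → cylinderMap n y ∈ Icc 0 1) :
    (∃ n, 2 ≤ n ∧ P n) ↔ P (lurothDigit y) :=
  ⟨fun ⟨n, hn, hPn⟩ => lurothDigit_eq_of_mem_Icc hy hn (hP n hn hPn) ▸ hPn,
    fun h => ⟨_, two_le_lurothDigit h0 h1, h⟩⟩

end Cylinders

section Branches

/-- The sign `s` read off at a single point: `sgn c ω x n = signAt c (ω n) (Tom c ω n x)`. -/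
def signAt (c : ℝ) (j : Bool) (y : ℝ) : ℕ :=
  if c = 0 then (if j then 1 else 0)
  else if (j = false ∧ y ∈ SwitchS c) ∨
          (∃ d : ℕ, 1 ≤ d ∧ zm c d < y ∧ y < 1/(d:ℝ)) ∨
          y = 1 then 0
  else 1

/-- In terms of `u = T_L y`, the switch region `S` is `c ≤ u ≤ 1 - c`. -/
def UsesTA (c : ℝ) (j : Bool) (y : ℝ) : Prop :=
  (j = false ∧ TL y < c) ∨ (j = true ∧ TL y ≤ 1 - c)

variable {c y : ℝ}

theorem exists_one_div_le_lt_zp_iff (hc1 : c ≤ 1) (hy : Irrational y) (h0 : 0 < y)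
    (h1 : y < 1) : (∃ n : ℕ, 2 ≤ n ∧ 1 / (n : ℝ) ≤ y ∧ y < zp c n) ↔ TL y < c := by
  have hd := two_le_lurothDigit h0 h1
  have hP (n : ℕ) (hn : 2 ≤ n) (h : 1 / (n : ℝ) ≤ y ∧ y < zp c n) :
      cylinderMap n y ∈ Icc 0 1 := by
    rw [one_div_le_iff_nonneg_cylinderMap hn, ← not_le, zp_le_iff_le_cylinderMap hn] at h
    exact ⟨h.1, by linarith⟩
  rw [exists_iff_lurothDigit hy h0 h1 hP, one_div_le_iff_nonneg_cylinderMap hd, ← not_le,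
    zp_le_iff_le_cylinderMap hd, TL_eq_cylinderMap_lurothDigit h0 h1]
  simp [(cylinderMap_lurothDigit_mem h0 h1).1]

theorem exists_one_div_le_le_zm_pred_iff (hc0 : 0 ≤ c) (hy : Irrational y) (h0 : 0 < y)
    (h1 : y < 1) :
    (∃ n : ℕ, 2 ≤ n ∧ 1 / (n : ℝ) ≤ y ∧ y ≤ zm c (n - 1)) ↔ TL y ≤ 1 - c := by
  have hd := two_le_lurothDigit h0 h1
  have hP (n : ℕ) (hn : 2 ≤ n) (h : 1 / (n : ℝ) ≤ y ∧ y ≤ zm c (n - 1)) :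
      cylinderMap n y ∈ Icc 0 1 := by
    rw [one_div_le_iff_nonneg_cylinderMap hn, le_zm_pred_iff_cylinderMap_le hn] at h
    exact ⟨h.1, by linarith⟩
  rw [exists_iff_lurothDigit hy h0 h1 hP, one_div_le_iff_nonneg_cylinderMap hd,
    le_zm_pred_iff_cylinderMap_le hd, TL_eq_cylinderMap_lurothDigit h0 h1]
  simp [(cylinderMap_lurothDigit_mem h0 h1).1]

theorem Tc_eq_ite_s3 (hc0 : 0 ≤ c) (hc1 : c ≤ 1) (hy : Irrational y) (h0 : 0 < y) (h1 : y < 1)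
    (j : Bool) : Tc j c y = if UsesTA c j y then TA y else TL y := by
  have hnot : ¬ (c = 0 ∧ (y = 0 ∨ ∃ n : ℕ, 2 ≤ n ∧ y = 1 / (n : ℝ))) := by
    rintro ⟨-, h | ⟨n, -, h⟩⟩
    · exact hy.ne_zero h
    · exact hy.ne_rat (1 / n) (by push_cast; exact h)
  rw [Tc, if_neg hnot, if_neg h1.ne]
  refine if_congr ?_ rfl rfl
  rw [exists_one_div_le_lt_zp_iff hc1 hy h0 h1, exists_one_div_le_le_zm_pred_iff hc0 hy h0 h1,
    UsesTA]

theorem mem_switchS_iff (hc0 : 0 ≤ c) (hy : Irrational y) (hcy : c ≤ y) (h1 : y < 1) :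
    y ∈ SwitchS c ↔ c ≤ TL y ∧ TL y ≤ 1 - c := by
  have h0 : 0 < y := (hc0.trans hcy).lt_of_ne hy.ne_zero.symm
  have hd := two_le_lurothDigit h0 h1
  have hP (n : ℕ) (hn : 2 ≤ n) (h : zp c n ≤ y ∧ y ≤ zm c (n - 1)) :
      cylinderMap n y ∈ Icc 0 1 := by
    rw [zp_le_iff_le_cylinderMap hn, le_zm_pred_iff_cylinderMap_le hn] at h
    exact ⟨hc0.trans h.1, by linarith⟩
  change (y ∈ Icc c 1 ∧ _) ↔ _
  rw [and_iff_right ⟨hcy, h1.le⟩, exists_iff_lurothDigit hy h0 h1 hP,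
    zp_le_iff_le_cylinderMap hd, le_zm_pred_iff_cylinderMap_le hd,
    TL_eq_cylinderMap_lurothDigit h0 h1]

theorem exists_zm_lt_iff (hc1 : c ≤ 1) (hy : Irrational y) (h0 : 0 < y) (h1 : y < 1) :
    (∃ e : ℕ, 1 ≤ e ∧ zm c e < y ∧ y < 1 / (e : ℝ)) ↔ 1 - c < TL y := by
  have hd := two_le_lurothDigit h0 h1
  have hshift : (∃ e : ℕ, 1 ≤ e ∧ zm c e < y ∧ y < 1 / (e : ℝ)) ↔
      ∃ n : ℕ, 2 ≤ n ∧ zm c (n - 1) < y ∧ y < 1 / ((n : ℝ) - 1) := by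
    constructor
    · rintro ⟨e, he, h⟩
      exact ⟨e + 1, by omega, by simpa using h⟩
    · rintro ⟨n, hn, h⟩
      exact ⟨n - 1, by omega, by rwa [Nat.cast_sub (by omega), Nat.cast_one]⟩
  have hP (n : ℕ) (hn : 2 ≤ n) (h : zm c (n - 1) < y ∧ y < 1 / ((n : ℝ) - 1)) :
      cylinderMap n y ∈ Icc 0 1 := by
    rw [← not_le, le_zm_pred_iff_cylinderMap_le hn,
      lt_one_div_pred_iff_cylinderMap_lt_one hn] at h
    exact ⟨by linarith, h.2.le⟩
  rw [hshift, exists_iff_lurothDigit hy h0 h1 hP, ← not_le, le_zm_pred_iff_cylinderMap_le hd,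
    lt_one_div_pred_iff_cylinderMap_lt_one hd, TL_eq_cylinderMap_lurothDigit h0 h1]
  simp [(cylinderMap_lurothDigit_mem h0 h1).2]

theorem signAt_eq_ite (hc : c ∈ Icc 0 (1 / 2)) (hy : Irrational y) (hcy : c ≤ y) (h1 : y < 1)
    (j : Bool) : signAt c j y = if UsesTA c j y then 1 else 0 := by
  have h0 : 0 < y := (hc.1.trans hcy).lt_of_ne hy.ne_zero.symm
  rcases eq_or_ne c 0 with rfl | hc0
  · have hu := TL_eq_cylinderMap_lurothDigit h0 h1 ▸ cylinderMap_lurothDigit_mem h0 h1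
    cases j <;> simp [signAt, UsesTA, hu.1, hu.2.le]
  rw [signAt, if_neg hc0, mem_switchS_iff hc.1 hy hcy h1,
    exists_zm_lt_iff (by linarith [hc.2]) hy h0 h1]
  cases j
  · rcases lt_or_ge (TL y) c with hlt | hge
    · simp [UsesTA, hlt, not_le.2 hlt, h1.ne, show ¬ 1 - c < TL y by linarith [hc.2]]
    · have hcond : (false = false ∧ c ≤ TL y ∧ TL y ≤ 1 - c) ∨ 1 - c < TL y ∨ y = 1 :=
        (le_or_gt (TL y) (1 - c)).imp (⟨rfl, hge, ·⟩) Or.inl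
      rw [if_pos hcond, if_neg (by simp [UsesTA, hge])]
  · rcases le_or_gt (TL y) (1 - c) with hle | hlt
    · simp [UsesTA, hle, not_lt.2 hle, h1.ne]
    · simp [UsesTA, hlt, not_le.2 hlt]

end Branches

section Step

/-- Slope and offset of the branch `y ↦ (-1)^s (d(d-1)y - (d-1)) + s` recorded by the expansion
entry `(s, d)`. -/
def lurothSlope (e : ℕ × ℕ) : ℚ := (-1) ^ e.1 * (e.2 * (e.2 - 1))

def lurothOffset (e : ℕ × ℕ) : ℚ := (-1) ^ e.1 * (1 - e.2) + e.1

theorem two_le_abs_lurothSlope {e : ℕ × ℕ} (he : 2 ≤ e.2) :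
    (2 : ℝ) ≤ |(lurothSlope e : ℝ)| := by
  have he' : (2 : ℝ) ≤ e.2 := by exact_mod_cast he
  rw [lurothSlope, Rat.cast_mul, abs_mul, Rat.cast_pow, abs_pow, Rat.cast_neg, Rat.cast_one,
    abs_neg, abs_one, one_pow, one_mul]
  push_cast
  rw [abs_of_nonneg (by nlinarith)]
  nlinarith

variable {c y : ℝ}

theorem Tc_eq_lurothSlope_mul_add (hc : c ∈ Icc 0 (1 / 2)) (hy : Irrational y) (hcy : c ≤ y)
    (h1 : y < 1) (j : Bool) :
    Tc j c y = lurothSlope (signAt c j y, lurothDigit y) * y +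
      lurothOffset (signAt c j y, lurothDigit y) := by
  have h0 : 0 < y := (hc.1.trans hcy).lt_of_ne hy.ne_zero.symm
  rw [Tc_eq_ite_s3 hc.1 (by linarith [hc.2]) hy h0 h1, signAt_eq_ite hc hy hcy h1, TA,
    TL_eq_cylinderMap_lurothDigit h0 h1]
  split_ifs <;> simp [lurothSlope, lurothOffset, cylinderMap] <;> ring

theorem Tc_mapsTo (hc : c ∈ Icc 0 (1 / 2)) (j : Bool) :
    MapsTo (Tc j c) {y | Irrational y ∧ y ∈ Ico c 1} {y | Irrational y ∧ y ∈ Ico c 1} := by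
  rintro y ⟨hy, hcy, h1⟩
  have h0 : 0 < y := (hc.1.trans hcy).lt_of_ne hy.ne_zero.symm
  have hTL := TL_eq_cylinderMap_lurothDigit h0 h1
  have hu : TL y ∈ Ico 0 1 := hTL ▸ cylinderMap_lurothDigit_mem h0 h1
  have hirr : Irrational (TL y) := hTL ▸ hy.cylinderMap _ (two_le_lurothDigit h0 h1)
  have hpos : 0 < TL y := hu.1.lt_of_ne hirr.ne_zero.symm
  rw [Tc_eq_ite_s3 hc.1 (by linarith [hc.2]) hy h0 h1]
  split_ifs with h
  · refine ⟨by simpa [TA] using hirr.natCast_sub 1, ?_, by rw [TA]; linarith⟩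
    rw [TA]
    rcases h with ⟨-, h⟩ | ⟨-, h⟩ <;> linarith [hc.2]
  · refine ⟨hirr, ?_, hu.2⟩
    cases j <;> simp [UsesTA] at h <;> linarith [hc.2]

end Step

/-- no `c`-Lüroth expansion of an irrational `x ∈ [c,1]` is ultimately
periodic. -/
theorem irrational_not_ultimately_periodic (c : ℝ) (hc : c ∈ Set.Icc (0:ℝ) (1/2))
    (x : ℝ) (hx : x ∈ Set.Icc c 1) (hxi : Irrational x) (ω : ℕ → Bool) :
    ¬ UltimatelyPeriodic (expansion c ω x) := by
  have horbit (n : ℕ) : Tom c ω n x ∈ {y | Irrational y ∧ y ∈ Ico c 1} := by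
    induction n with
    | zero => exact ⟨hxi, hx.1, hx.2.lt_of_ne hxi.ne_one⟩
    | succ n ih => exact Tc_mapsTo hc (ω n) ih
  have hexp (n : ℕ) : expansion c ω x n =
      (signAt c (ω n) (Tom c ω n x), lurothDigit (Tom c ω n x)) :=
    Prod.ext rfl (if_neg (horbit n).1.ne_one)
  have hslope (n : ℕ) : 2 ≤ |(lurothSlope (expansion c ω x n) : ℝ)| := by
    obtain ⟨hy, hcy, h1⟩ := horbit n
    exact hexp n ▸ two_le_abs_lurothSlope
      (two_le_lurothDigit ((hc.1.trans hcy).lt_of_ne hy.ne_zero.symm) h1)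
  have hbound (n : ℕ) : |Tom c ω n x| ≤ 1 := by
    obtain ⟨-, hcy, h1⟩ := horbit n
    exact abs_le.2 ⟨by linarith [hc.1], h1.le⟩
  have hrec (n : ℕ) : Tom c ω (n + 1) x =
      lurothSlope (expansion c ω x n) * Tom c ω n x + lurothOffset (expansion c ω x n) := by
    obtain ⟨hy, hcy, h1⟩ := horbit n
    exact hexp n ▸ Tc_eq_lurothSlope_mul_add hc hy hcy h1 (ω n)
  intro hper
  obtain ⟨n, hn⟩ := exists_not_irrational_of_affine_recurrence one_lt_two hslope hbound hrec
    (hper.comp fun e => (lurothSlope e, lurothOffset e))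
  exact hn (horbit n).1
end
end

section
/- For every 0 < p < 1, the product measure m_p × λ on {0,1}^ℕ × [0,1] is an invariant probability measure for the random 0-Lüroth transformation L_0 (i.e. L_0 is measure preserving with respect to m_p × λ), and L_0 is ergodic with respect to m_p × λ. -/
open MeasureTheory Filter Set
open scoped Classical ENNReal

noncomputable section

/-! On each interval `(1/(k+2), 1/(k+1))` both `T_{0,0}` and `T_{1,0}` are affine onto `(0,1)`
with slope `±(k+1)(k+2)`, so `L_0` pushes `m_p × λ` restricted to a rectangle
`{ω₁ = j} × (1/(k+2), 1/(k+1))` forward to a multiple of `m_p × λ`. Summing over these rectangles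
gives invariance, and iterating gives the same for `L_0^n` on every cylinder of rank `n`. Hence an
invariant set `E` satisfies `μ (C ∩ E) = μ C * μ E` for all cylinders `C`, i.e. `E` is independent
of the σ-algebra they generate. The fundamental intervals shrink geometrically, so this σ-algebra
contains every measurable set up to a null set; thus `E` is independent of itself and
`μ E ∈ {0, 1}`. -/

open ProbabilityTheory Function

section

variable {α : Type*} [mα : MeasurableSpace α] {μ : Measure α}

theorem exists_measurableSet_ae_eq_of_generateFrom {m' : MeasurableSpace α} {C : Set (Set α)}
    (hgen : mα = .generateFrom C) (hC : ∀ s ∈ C, ∃ t, MeasurableSet[m'] t ∧ s =ᵐ[μ] t)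
    {s : Set α} (hs : MeasurableSet[mα] s) : ∃ t, MeasurableSet[m'] t ∧ s =ᵐ[μ] t := by
  replace hs : MeasurableSet[.generateFrom C] s := hgen ▸ hs
  induction s, hs using MeasurableSpace.generateFrom_induction with
  | hC s hs _ => exact hC s hs
  | empty => exact ⟨∅, .empty, .rfl⟩
  | compl s _ ih =>
    obtain ⟨t, ht, hst⟩ := ih
    exact ⟨tᶜ, ht.compl, hst.compl⟩
  | iUnion s _ ih =>
    choose t ht hst using ih
    exact ⟨⋃ i, t i, .iUnion ht, .countable_iUnion hst⟩

theorem map_eq_self_of_map_restrict_eq_smul [IsProbabilityMeasure μ] {T : α → α}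
    (hT : Measurable T) {ι : Type*} [Countable ι] {P : ι → Set α}
    (hdisj : Pairwise (Disjoint on P)) (hP : ∀ i, MeasurableSet (P i))
    (hcover : ∀ᵐ x ∂μ, x ∈ ⋃ i, P i) (hmap : ∀ i, (μ.restrict (P i)).map T = μ (P i) • μ) :
    μ.map T = μ := by
  have hsum : ∑' i, μ (P i) = 1 := by
    rw [← measure_iUnion hdisj hP, ← measure_univ (μ := μ)]
    exact measure_congr (ae_eq_univ.2 (ae_iff.1 hcover))
  calc μ.map T = (μ.restrict (⋃ i, P i)).map T := by rw [Measure.restrict_eq_self_of_ae_mem hcover]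
    _ = Measure.sum fun i => (μ.restrict (P i)).map T := by
      rw [Measure.restrict_iUnion hdisj hP, Measure.map_sum hT.aemeasurable]
    _ = (∑' i, μ (P i)) • μ := by
      simp_rw [hmap]
      ext s hs
      simp [Measure.sum_apply _ hs, ENNReal.tsum_mul_right]
    _ = μ := by rw [hsum, one_smul]

theorem ergodic_of_map_iterate_restrict_eq_smul [IsProbabilityMeasure μ] {T : α → α}
    (hT : MeasurePreserving T μ μ) {C : Set (Set α)} (hCpi : IsPiSystem C)
    (hCmeas : ∀ s ∈ C, MeasurableSet s)
    (hmix : ∀ s ∈ C, ∃ n, (μ.restrict s).map T^[n] = μ s • μ)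
    (happrox : ∀ s, MeasurableSet s → ∃ t, MeasurableSet[.generateFrom C] t ∧ s =ᵐ[μ] t) :
    Ergodic T μ := by
  refine ⟨hT, ⟨fun E hE hinv => ?_⟩⟩
  have hCE : IndepSets C {E} μ := by
    refine (IndepSets_iff _ _ _).2 fun s t hs ht => ?_
    obtain ⟨n, hn⟩ := hmix s hs
    rw [Set.mem_singleton_iff.mp ht]
    calc μ (s ∩ E) = (μ.restrict s) (T^[n] ⁻¹' E) := by
          rw [Function.IsFixedPt.preimage_iterate hinv, Measure.restrict_apply hE, inter_comm]
      _ = μ s * μ E := by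
          rw [← Measure.map_apply (hT.measurable.iterate n) hE, hn, Measure.smul_apply, smul_eq_mul]
  have hindep := (Indep_iff _ _ _).1 <| IndepSets.indep' hCmeas (by simpa using hE) hCpi
    (.singleton E) hCE
  obtain ⟨t, ht, hEt⟩ := happrox E hE
  have hEE : IndepSet E E μ := by
    rw [indepSet_iff_measure_inter_eq_mul hE hE μ]
    calc μ (E ∩ E) = μ (t ∩ E) := measure_congr (hEt.inter .rfl)
      _ = μ t * μ E := hindep t E ht (MeasurableSpace.measurableSet_generateFrom rfl)
      _ = μ E * μ E := by rw [measure_congr hEt]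
  rw [eventuallyConst_set', ae_eq_empty, ae_eq_univ, prob_compl_eq_zero_iff hE]
  exact measure_eq_zero_or_one_of_indepSet_self hEE

end

theorem isPiSystem_of_nonempty_inter_subset {α : Type*} {β : ℕ → Type*} (F : ∀ n, β n → Set α)
    (hF : ∀ n k x y, n ≤ k → (F n x ∩ F k y).Nonempty → F k y ⊆ F n x) :
    IsPiSystem {s | ∃ n x, F n x = s} := by
  rintro _ ⟨n, x, rfl⟩ _ ⟨k, y, rfl⟩ hne
  rcases le_total n k with h | h
  · exact ⟨k, y, (inter_eq_right.2 (hF n k x y h hne)).symm⟩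
  · exact ⟨n, x, (inter_eq_left.2 (hF k n y x h (inter_comm (F n x) _ ▸ hne))).symm⟩

def prefixCylinder (n : ℕ) (f : Fin n → Bool) : Set (ℕ → Bool) := {ω | ∀ i : Fin n, ω i = f i}

def prefixCylinders : Set (Set (ℕ → Bool)) := {s | ∃ n f, prefixCylinder n f = s}

theorem measurableSet_prefixCylinder (n : ℕ) (f : Fin n → Bool) :
    MeasurableSet (prefixCylinder n f) := by
  simp only [prefixCylinder, ofPred_forall]
  exact .iInter fun i => measurableSet_eq_fun (measurable_pi_apply _) measurable_const

@[simp]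
theorem prefixCylinder_zero (f : Fin 0 → Bool) : prefixCylinder 0 f = univ := by
  simp [prefixCylinder]

theorem isPiSystem_prefixCylinders : IsPiSystem prefixCylinders := by
  refine isPiSystem_of_nonempty_inter_subset prefixCylinder fun n k f g h ⟨ω, hf, hg⟩ ω' hω' i => ?_
  exact (hω' (i.castLE h)).trans ((hg (i.castLE h)).symm.trans (hf i))

theorem generateFrom_prefixCylinders : .generateFrom prefixCylinders = MeasurableSpace.pi := by
  refine le_antisymm (MeasurableSpace.generateFrom_le ?_) ?_
  · rintro _ ⟨n, f, rfl⟩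
    exact measurableSet_prefixCylinder n f
  · let m₀ : MeasurableSpace (ℕ → Bool) := .generateFrom prefixCylinders
    have hres (n : ℕ) : Measurable[m₀] fun (ω : ℕ → Bool) (i : Fin n) => ω i :=
      @measurable_to_countable' _ _ _ _ m₀ _ fun f => MeasurableSpace.measurableSet_generateFrom
        ⟨n, f, by ext ω; simp [prefixCylinder, funext_iff]⟩
    have hid : @Measurable _ _ m₀ MeasurableSpace.pi (id : (ℕ → Bool) → ℕ → Bool) :=
      (@measurable_pi_iff _ _ _ m₀ _ _).2 fun i =>
        (measurable_pi_apply (Fin.last i)).comp (hres (i + 1))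
    simpa only [MeasurableSpace.comap_id] using hid.comap_le

def bernoulliWeight (p : ℝ) (j : Bool) : ℝ≥0∞ := ENNReal.ofReal (if j then 1 - p else p)

namespace IsBernoulli

variable {p : ℝ} {m : Measure (ℕ → Bool)}

theorem measure_prefixCylinder (hm : IsBernoulli p m) (n : ℕ) (f : Fin n → Bool) :
    m (prefixCylinder n f) = ∏ i, bernoulliWeight p (f i) :=
  hm.2 n f

theorem measure_head_eq (hm : IsBernoulli p m) (j : Bool) :
    m {ω | ω 0 = j} = bernoulliWeight p j := by
  simpa [prefixCylinder] using hm.measure_prefixCylinder 1 fun _ => j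

theorem map_tail_restrict_head_eq (hm : IsBernoulli p m) (j : Bool) :
    (m.restrict {ω | ω 0 = j}).map (fun ω n => ω (n + 1)) = bernoulliWeight p j • m := by
  have := hm.1
  have htail : Measurable fun (ω : ℕ → Bool) n => ω (n + 1) := by fun_prop
  refine ext_of_generate_finite _ generateFrom_prefixCylinders.symm isPiSystem_prefixCylinders
    ?_ ?_
  · rintro _ ⟨n, f, rfl⟩
    have hcons : (fun (ω : ℕ → Bool) n => ω (n + 1)) ⁻¹' prefixCylinder n f ∩ {ω | ω 0 = j} =
        prefixCylinder (n + 1) (Fin.cons j f) := by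
      ext ω
      simp [prefixCylinder, Fin.forall_fin_succ, and_comm]
    rw [Measure.map_apply htail (measurableSet_prefixCylinder n f),
      Measure.restrict_apply (htail (measurableSet_prefixCylinder n f)), hcons,
      hm.measure_prefixCylinder, Measure.smul_apply, hm.measure_prefixCylinder,
      Fin.prod_univ_succ]
    simp
  · rw [Measure.map_apply htail .univ, preimage_univ, Measure.restrict_apply_univ,
      hm.measure_head_eq]
    simp

end IsBernoulli

theorem measurable_TL : Measurable TL := by
  unfold TL
  refine Measurable.ite (measurableSet_singleton 0) measurable_const
    (Measurable.ite (measurableSet_singleton 1) measurable_const ?_)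
  fun_prop

theorem measurable_Tc (j : Bool) : Measurable (Tc j 0) := by
  have hunit : {x : ℝ | (0:ℝ) = 0 ∧ (x = 0 ∨ ∃ n : ℕ, 2 ≤ n ∧ x = 1 / (n:ℝ))}.Countable :=
    ((countable_range fun n : ℕ => 1 / (n:ℝ)).insert 0).mono
      fun x ⟨_, hx⟩ => hx.imp id fun ⟨n, _, hn⟩ => ⟨n, hn.symm⟩
  have hswitch : MeasurableSet {x : ℝ |
      (j = false ∧ ∃ n : ℕ, 2 ≤ n ∧ 1 / (n:ℝ) ≤ x ∧ x < zp 0 n) ∨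
      (j = true ∧ ∃ n : ℕ, 2 ≤ n ∧ 1 / (n:ℝ) ≤ x ∧ x ≤ zm 0 (n - 1))} := by
    simp only [ofPred_or, ofPred_and, ofPred_exists]
    measurability
  exact Measurable.ite hunit.measurableSet measurable_const <|
    Measurable.ite (measurableSet_singleton 1) measurable_const <|
    Measurable.ite hswitch (measurable_const.sub measurable_TL) measurable_TL

local notation "𝓛" => volume.restrict (Icc (0:ℝ) 1)

instance : IsProbabilityMeasure 𝓛 := ⟨by simp⟩

-- the branch of the Lüroth digit `k + 2`
def branchInterval (k : ℕ) : Set ℝ := Ioo (1 / ((k:ℝ) + 2)) (1 / ((k:ℝ) + 1))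

def branchSlope (k : ℕ) : ℝ := ((k:ℝ) + 2) * ((k:ℝ) + 1)

def branchMap (j : Bool) (k : ℕ) (x : ℝ) : ℝ :=
  if j then ((k:ℝ) + 2) - branchSlope k * x else branchSlope k * x - ((k:ℝ) + 1)

theorem measurableSet_branchInterval (k : ℕ) : MeasurableSet (branchInterval k) :=
  measurableSet_Ioo

theorem two_le_branchSlope (k : ℕ) : 2 ≤ branchSlope k := by
  unfold branchSlope; nlinarith [(Nat.cast_nonneg k : (0:ℝ) ≤ k)]

theorem branchInterval_subset_Ioo (k : ℕ) : branchInterval k ⊆ Ioo 0 1 :=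
  Ioo_subset_Ioo (by positivity) (div_le_one_of_le₀ (by simp) (by positivity))

theorem pairwise_disjoint_branchInterval : Pairwise (Disjoint on branchInterval) := by
  suffices h : ∀ k l, k < l → Disjoint (branchInterval k) (branchInterval l) from
    fun k l hkl => hkl.lt_or_gt.elim (h k l) fun h' => (h l k h').symm
  intro k l hkl
  refine (Ioc_disjoint_Ioc_of_le (one_div_le_one_div_of_le (by positivity) ?_)).symm.mono
    Ioo_subset_Ioc_self Ioo_subset_Ioc_self
  exact_mod_cast (by omega : k + 2 ≤ l + 1)

theorem Tc_eq_branchMap (j : Bool) {k : ℕ} {x : ℝ} (hx : x ∈ branchInterval k) :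
    Tc j 0 x = branchMap j k x := by
  obtain ⟨hx0, hx1⟩ := branchInterval_subset_Ioo k hx
  have hk : ((k:ℝ) + 1) < 1 / x ∧ 1 / x < (k:ℝ) + 2 := by
    obtain ⟨h1, h2⟩ := hx
    constructor
    · rw [lt_one_div (by positivity) hx0]; exact h2
    · rw [one_div_lt hx0 (by positivity)]; exact h1
  have hceil : ⌈1 / x⌉ = (k:ℤ) + 2 := by
    rw [Int.ceil_eq_iff]; push_cast; constructor <;> linarith
  have hTL : TL x = branchSlope k * x - ((k:ℝ) + 1) := by
    rw [TL, if_neg hx0.ne', if_neg hx1.ne, hceil, branchSlope]; push_cast; ring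
  have hnot_unit : ¬ (x = 0 ∨ ∃ n : ℕ, 2 ≤ n ∧ x = 1 / (n:ℝ)) := by
    rintro (h | ⟨n, -, rfl⟩)
    · exact hx0.ne' h
    · rw [one_div_one_div] at hk
      obtain ⟨h1, h2⟩ := hk
      have : k + 1 < n := by exact_mod_cast h1
      have : n < k + 2 := by exact_mod_cast h2
      omega
  rw [Tc, if_neg fun h => hnot_unit h.2, if_neg hx1.ne]
  cases j
  · rw [if_neg]
    · simp [branchMap, hTL]
    · rintro (⟨-, n, -, h1, h2⟩ | ⟨h, -⟩)
      · simp only [zp, zero_mul, add_zero] at h2; linarith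
      · exact Bool.false_ne_true h
  · have hzm : zm 0 (k + 2 - 1) = 1 / ((k:ℝ) + 1) := by simp [zm]
    rw [if_pos (Or.inr ⟨rfl, k + 2, by omega, by exact_mod_cast hx.1.le, hzm ▸ hx.2.le⟩)]
    simp only [TA, hTL, branchMap, if_true]
    ring

theorem measurable_branchMap (j : Bool) (k : ℕ) : Measurable (branchMap j k) := by
  cases j
  · exact (measurable_const_mul _).sub_const _
  · exact measurable_const.sub (measurable_const_mul _)

theorem abs_branchMap_sub (j : Bool) (k : ℕ) (x y : ℝ) :
    |branchMap j k x - branchMap j k y| = branchSlope k * |x - y| := by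
  have hpos : 0 < branchSlope k := by linarith [two_le_branchSlope k]
  rw [← abs_of_pos hpos, ← abs_mul]
  cases j
  · simp only [branchMap, Bool.false_eq_true, if_false]; ring_nf
  · rw [← abs_neg]; simp only [branchMap, if_true]; ring_nf

theorem branchMap_preimage_Ioo (j : Bool) (k : ℕ) :
    branchMap j k ⁻¹' Ioo 0 1 = branchInterval k := by
  have h1 : (0:ℝ) < (k:ℝ) + 1 := by positivity
  have h2 : (0:ℝ) < (k:ℝ) + 2 := by positivity
  ext x
  simp only [mem_preimage, mem_Ioo, branchInterval, branchMap, branchSlope, div_lt_iff₀ h2,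
    lt_div_iff₀ h1]
  cases j <;> simp only [Bool.false_eq_true, if_true, if_false] <;>
    constructor <;> rintro ⟨ha, hb⟩ <;> constructor <;> nlinarith

theorem map_volume_mul_add {a : ℝ} (ha : a ≠ 0) (b : ℝ) :
    volume.map (fun x => a * x + b) = ENNReal.ofReal |a⁻¹| • volume := by
  rw [show (fun x => a * x + b) = (· + b) ∘ (a * ·) from rfl,
    ← Measure.map_map (measurable_add_const b) (measurable_const_mul a),
    Real.map_volume_mul_left ha, Measure.map_smul, map_add_right_eq_self]

theorem map_branchMap_volume (j : Bool) (k : ℕ) :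
    volume.map (branchMap j k) = ENNReal.ofReal (branchSlope k)⁻¹ • volume := by
  have hpos : 0 < branchSlope k := by linarith [two_le_branchSlope k]
  cases j
  · rw [show branchMap false k = fun x => branchSlope k * x + -((k:ℝ) + 1) by
        ext x; simp [branchMap]; ring,
      map_volume_mul_add hpos.ne', abs_inv, abs_of_pos hpos]
  · rw [show branchMap true k = fun x => -branchSlope k * x + ((k:ℝ) + 2) by
        ext x; simp [branchMap]; ring,
      map_volume_mul_add (neg_ne_zero.2 hpos.ne'), abs_inv, abs_neg, abs_of_pos hpos]

theorem map_Tc_restrict_branchInterval (j : Bool) (k : ℕ) :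
    ((𝓛).restrict (branchInterval k)).map (Tc j 0) = ENNReal.ofReal (branchSlope k)⁻¹ • 𝓛 := by
  rw [Measure.restrict_restrict (measurableSet_branchInterval k), inter_eq_self_of_subset_left
    ((branchInterval_subset_Ioo k).trans Ioo_subset_Icc_self)]
  calc (volume.restrict (branchInterval k)).map (Tc j 0)
      = (volume.restrict (branchMap j k ⁻¹' Ioo 0 1)).map (branchMap j k) := by
        rw [branchMap_preimage_Ioo]
        exact Measure.map_congr ((ae_restrict_mem (measurableSet_branchInterval k)).mono
          fun x hx => Tc_eq_branchMap j hx)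
    _ = ENNReal.ofReal (branchSlope k)⁻¹ • 𝓛 := by
        rw [← Measure.restrict_map (measurable_branchMap j k) measurableSet_Ioo,
          map_branchMap_volume, Measure.restrict_smul, Measure.restrict_congr_set Ioo_ae_eq_Icc]

theorem measure_branchInterval (k : ℕ) :
    𝓛 (branchInterval k) = ENNReal.ofReal (branchSlope k)⁻¹ := by
  have h := congrArg (· univ) (map_Tc_restrict_branchInterval false k)
  simpa [Measure.map_apply (measurable_Tc false) .univ] using h

theorem ae_mem_iUnion_branchInterval : ∀ᵐ x ∂𝓛, x ∈ ⋃ k, branchInterval k := by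
  have hcount : (insert 0 (range fun n : ℕ => 1 / (n:ℝ))).Countable := (countable_range _).insert 0
  rw [ae_restrict_iff' measurableSet_Icc]
  filter_upwards [hcount.ae_notMem volume] with x hx hx01
  simp only [mem_insert_iff, mem_range, not_or, not_exists] at hx
  obtain ⟨hx0, hx_unit⟩ := hx
  have hpos : 0 < x := hx01.1.lt_of_ne' hx0
  have hlt1 : x < 1 := hx01.2.lt_of_ne fun h => hx_unit 1 (by simp [h])
  set N := ⌊1 / x⌋₊
  have hN1 : 1 ≤ N := Nat.le_floor (by rw [Nat.cast_one, le_div_iff₀ hpos]; linarith)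
  have hlow : (N:ℝ) < 1 / x := (Nat.floor_le (by positivity)).lt_of_ne
    fun h => hx_unit N (by rw [h, one_div_one_div])
  have hup : 1 / x < N + 1 := Nat.lt_floor_add_one _
  have hcast : ((N - 1 : ℕ) : ℝ) = N - 1 := by rw [Nat.cast_sub hN1, Nat.cast_one]
  refine mem_iUnion.2 ⟨N - 1, ?_, ?_⟩ <;> rw [hcast]
  · rw [show (N:ℝ) - 1 + 2 = N + 1 by ring, one_div_lt (by positivity) hpos]
    exact hup
  · rw [sub_add_cancel, lt_one_div hpos (by exact_mod_cast hN1)]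
    exact hlow

theorem measurableSet_head_prod_branchInterval (j : Bool) (k : ℕ) :
    MeasurableSet ({ω : ℕ → Bool | ω 0 = j} ×ˢ branchInterval k) :=
  (measurableSet_eq_fun (measurable_pi_apply 0) measurable_const).prod
    (measurableSet_branchInterval k)

theorem measurable_L0 : Measurable L0 := by
  refine Measurable.prod (by fun_prop) ?_
  have hsplit : (fun q : (ℕ → Bool) × ℝ => Tc (q.1 0) 0 q.2) =
      fun q => if q.1 0 = true then Tc true 0 q.2 else Tc false 0 q.2 := by
    ext q; cases q.1 0 <;> rfl
  change Measurable fun q : (ℕ → Bool) × ℝ => Tc (q.1 0) 0 q.2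
  rw [hsplit]
  exact Measurable.ite (measurableSet_eq_fun (by fun_prop) measurable_const)
    ((measurable_Tc true).comp measurable_snd) ((measurable_Tc false).comp measurable_snd)

def lurothCylinder (n : ℕ) (f : Fin n → Bool) (d : Fin n → ℕ) : Set ((ℕ → Bool) × ℝ) :=
  {q | ∀ i : Fin n, q.1 i = f i ∧ (L0^[i] q).2 ∈ branchInterval (d i)}

def lurothCylinders : Set (Set ((ℕ → Bool) × ℝ)) :=
  {s | ∃ (n : ℕ) (w : (Fin n → Bool) × (Fin n → ℕ)), lurothCylinder n w.1 w.2 = s}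

@[simp]
theorem lurothCylinder_zero (f : Fin 0 → Bool) (d : Fin 0 → ℕ) : lurothCylinder 0 f d = univ := by
  simp [lurothCylinder]

theorem lurothCylinder_succ (n : ℕ) (f : Fin (n + 1) → Bool) (d : Fin (n + 1) → ℕ) :
    lurothCylinder (n + 1) f d = ({ω | ω 0 = f 0} ×ˢ branchInterval (d 0)) ∩
      L0 ⁻¹' lurothCylinder n (Fin.tail f) (Fin.tail d) := by
  ext q
  simp only [lurothCylinder, Fin.forall_fin_succ, mem_inter_iff, mem_prod, mem_ofPred_eq,
    mem_preimage, Fin.val_zero, Fin.val_succ, Function.iterate_succ_apply, Fin.tail]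
  exact Iff.rfl

theorem measurableSet_lurothCylinder (n : ℕ) (f : Fin n → Bool) (d : Fin n → ℕ) :
    MeasurableSet (lurothCylinder n f d) := by
  induction n with
  | zero => simp
  | succ n ih =>
    rw [lurothCylinder_succ]
    exact (measurableSet_head_prod_branchInterval _ _).inter (measurable_L0 (ih _ _))

theorem isPiSystem_lurothCylinders : IsPiSystem lurothCylinders := by
  refine isPiSystem_of_nonempty_inter_subset
    (fun n (w : (Fin n → Bool) × (Fin n → ℕ)) => lurothCylinder n w.1 w.2)
    fun n k w v h ⟨q, hw, hv⟩ q' hq' i => ?_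
  obtain ⟨hq'1, hq'2⟩ := hq' (i.castLE h)
  obtain ⟨hv1, hv2⟩ := hv (i.castLE h)
  obtain ⟨hw1, hw2⟩ := hw i
  refine ⟨hq'1.trans (hv1.symm.trans hw1), ?_⟩
  rw [pairwise_disjoint_branchInterval.eq (not_disjoint_iff.2 ⟨_, hw2, hv2⟩)]
  exact hq'2

theorem two_pow_mul_abs_sub_le {n : ℕ} {f : Fin n → Bool} {d : Fin n → ℕ} {q q' : (ℕ → Bool) × ℝ}
    (hq : q ∈ lurothCylinder n f d) (hq' : q' ∈ lurothCylinder n f d) :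
    2 ^ n * |q.2 - q'.2| ≤ |(L0^[n] q).2 - (L0^[n] q').2| := by
  induction n generalizing q q' with
  | zero => simp
  | succ n ih =>
    rw [lurothCylinder_succ] at hq hq'
    obtain ⟨⟨hq0, hqI⟩, hqL⟩ := hq
    obtain ⟨⟨hq'0, hq'I⟩, hq'L⟩ := hq'
    have hstep : |(L0 q).2 - (L0 q').2| = branchSlope (d 0) * |q.2 - q'.2| := by
      change |Tc (q.1 0) 0 q.2 - Tc (q'.1 0) 0 q'.2| = _
      rw [mem_ofPred_eq.mp hq0, mem_ofPred_eq.mp hq'0, Tc_eq_branchMap _ hqI,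
        Tc_eq_branchMap _ hq'I, abs_branchMap_sub]
    calc 2 ^ (n + 1) * |q.2 - q'.2| = 2 ^ n * (2 * |q.2 - q'.2|) := by ring
      _ ≤ 2 ^ n * |(L0 q).2 - (L0 q').2| := by
        rw [hstep]
        gcongr
        exact two_le_branchSlope _
      _ ≤ |(L0^[n + 1] q).2 - (L0^[n + 1] q').2| := ih hqL hq'L

theorem abs_sub_lt_of_mem_lurothCylinder {n : ℕ} {f : Fin (n + 1) → Bool} {d : Fin (n + 1) → ℕ}
    {q q' : (ℕ → Bool) × ℝ} (hq : q ∈ lurothCylinder (n + 1) f d)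
    (hq' : q' ∈ lurothCylinder (n + 1) f d) : |q.2 - q'.2| < (1 / 2) ^ n := by
  have hcontract := two_pow_mul_abs_sub_le (f := f ∘ Fin.castSucc) (d := d ∘ Fin.castSucc)
    (fun i => hq i.castSucc) (fun i => hq' i.castSucc)
  have hI : (L0^[n] q).2 ∈ Ioo 0 1 := branchInterval_subset_Ioo _ (hq (Fin.last n)).2
  have hI' : (L0^[n] q').2 ∈ Ioo 0 1 := branchInterval_subset_Ioo _ (hq' (Fin.last n)).2
  have hlt : |(L0^[n] q).2 - (L0^[n] q').2| < 1 := by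
    rw [abs_sub_lt_iff]; constructor <;> linarith [hI.1, hI.2, hI'.1, hI'.2]
  rw [one_div_pow, lt_div_iff₀' (by positivity)]
  exact hcontract.trans_lt hlt

theorem countable_lurothCylinders : lurothCylinders.Countable := by
  refine (countable_range fun w : Σ n, (Fin n → Bool) × (Fin n → ℕ) =>
    lurothCylinder w.1 w.2.1 w.2.2).mono ?_
  rintro _ ⟨n, w, rfl⟩
  exact ⟨⟨n, w⟩, rfl⟩

theorem exists_lurothCylinder_mem_subset {q : (ℕ → Bool) × ℝ}
    (hq : ∀ i, (L0^[i] q).2 ∈ ⋃ k, branchInterval k) {n : ℕ} {f : Fin n → Bool} {U : Set ℝ}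
    (hU : IsOpen U) (hqs : q ∈ prefixCylinder n f ×ˢ U) :
    ∃ c ∈ lurothCylinders, q ∈ c ∧ c ⊆ prefixCylinder n f ×ˢ U := by
  choose d hd using fun i => mem_iUnion.1 (hq i)
  obtain ⟨ε, hε, hball⟩ := Metric.isOpen_iff.1 hU q.2 hqs.2
  obtain ⟨K, hK⟩ := exists_pow_lt_of_lt_one hε (by norm_num : (1 / 2 : ℝ) < 1)
  set N := max n K
  have hq_mem : q ∈ lurothCylinder (N + 1) (fun i => q.1 i) (fun i => d i) := fun i => ⟨rfl, hd i⟩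
  refine ⟨_, ⟨N + 1, (fun i => q.1 i, fun i => d i), rfl⟩, hq_mem,
    fun q' hq' => ⟨fun i => ?_, hball ?_⟩⟩
  · have hi : (i : ℕ) < N + 1 := by omega
    exact ((hq' ⟨i, hi⟩).1).trans (hqs.1 i)
  · rw [Metric.mem_ball, Real.dist_eq]
    calc |q'.2 - q.2| < (1 / 2) ^ N := abs_sub_lt_of_mem_lurothCylinder hq' hq_mem
      _ ≤ (1 / 2) ^ K := pow_le_pow_of_le_one (by norm_num) (by norm_num) (le_max_right n K)
      _ < ε := hK

theorem generateFrom_prefixCylinder_prod_isOpen :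
    .generateFrom (image2 (· ×ˢ ·) prefixCylinders {U : Set ℝ | IsOpen U}) =
      (inferInstance : MeasurableSpace ((ℕ → Bool) × ℝ)) := by
  have hC : IsCountablySpanning prefixCylinders :=
    ⟨fun _ => univ, fun _ => ⟨0, Fin.elim0, prefixCylinder_zero _⟩, iUnion_const _⟩
  have hD : IsCountablySpanning {U : Set ℝ | IsOpen U} :=
    ⟨fun _ => univ, fun _ => isOpen_univ (X := ℝ), iUnion_const _⟩
  rw [← generateFrom_prod_eq hC hD, generateFrom_prefixCylinders, ← borel,
    ← BorelSpace.measurable_eq]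

section Bernoulli

variable {p : ℝ} {m : Measure (ℕ → Bool)}

theorem map_L0_restrict_head_prod_branchInterval (hm : IsBernoulli p m) (j : Bool) (k : ℕ) :
    ((m.prod 𝓛).restrict ({ω | ω 0 = j} ×ˢ branchInterval k)).map L0 =
      (bernoulliWeight p j * ENNReal.ofReal (branchSlope k)⁻¹) • m.prod 𝓛 := by
  have := hm.1
  have hL0 : L0 =ᵐ[(m.prod 𝓛).restrict ({ω | ω 0 = j} ×ˢ branchInterval k)]
      Prod.map (fun ω n => ω (n + 1)) (Tc j 0) := by
    filter_upwards [ae_restrict_mem (measurableSet_head_prod_branchInterval j k)] with q hq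
    simp only [L0, Prod.map, mem_ofPred_eq.mp hq.1]
  rw [Measure.map_congr hL0, ← Measure.prod_restrict,
    ← Measure.map_prod_map _ _ (by fun_prop) (measurable_Tc j), hm.map_tail_restrict_head_eq,
    map_Tc_restrict_branchInterval, Measure.prod_smul_left, Measure.prod_smul_right, smul_smul]

theorem measure_head_prod_branchInterval (hm : IsBernoulli p m) (j : Bool) (k : ℕ) :
    (m.prod 𝓛) ({ω | ω 0 = j} ×ˢ branchInterval k) =
      bernoulliWeight p j * ENNReal.ofReal (branchSlope k)⁻¹ := by
  rw [Measure.prod_prod, hm.measure_head_eq, measure_branchInterval]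

theorem measurePreserving_L0 (hm : IsBernoulli p m) :
    MeasurePreserving L0 (m.prod 𝓛) (m.prod 𝓛) := by
  have := hm.1
  refine ⟨measurable_L0, map_eq_self_of_map_restrict_eq_smul measurable_L0
    (P := fun jk : Bool × ℕ => {ω | ω 0 = jk.1} ×ˢ branchInterval jk.2) ?_
    (fun jk => measurableSet_head_prod_branchInterval jk.1 jk.2) ?_ fun jk => ?_⟩
  · rintro ⟨j, k⟩ ⟨j', k'⟩ hne
    rw [onFun, Set.disjoint_prod]
    by_cases hk : k = k'
    · subst hk
      have hj : j ≠ j' := fun h => hne (h ▸ rfl)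
      exact .inl (disjoint_left.2 fun ω h h' => hj (h.symm.trans h'))
    · exact .inr (pairwise_disjoint_branchInterval hk)
  · filter_upwards [Measure.quasiMeasurePreserving_snd.ae ae_mem_iUnion_branchInterval] with q hq
    obtain ⟨k, hk⟩ := mem_iUnion.1 hq
    exact mem_iUnion.2 ⟨(q.1 0, k), rfl, hk⟩
  · rw [map_L0_restrict_head_prod_branchInterval hm, measure_head_prod_branchInterval hm]

theorem map_iterate_restrict_lurothCylinder (hm : IsBernoulli p m) (n : ℕ) (f : Fin n → Bool)
    (d : Fin n → ℕ) : ((m.prod 𝓛).restrict (lurothCylinder n f d)).map L0^[n] =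
      (m.prod 𝓛) (lurothCylinder n f d) • m.prod 𝓛 := by
  have := hm.1
  induction n with
  | zero => simp
  | succ n ih =>
    set R := {ω : ℕ → Bool | ω 0 = f 0} ×ˢ branchInterval (d 0)
    set C := lurothCylinder n (Fin.tail f) (Fin.tail d)
    have hC : MeasurableSet C := measurableSet_lurothCylinder _ _ _
    have hrect := map_L0_restrict_head_prod_branchInterval hm (f 0) (d 0)
    have hmeas : (m.prod 𝓛) (R ∩ L0 ⁻¹' C) =
        bernoulliWeight p (f 0) * ENNReal.ofReal (branchSlope (d 0))⁻¹ * (m.prod 𝓛) C := by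
      rw [inter_comm, ← Measure.restrict_apply (measurable_L0 hC),
        ← Measure.map_apply measurable_L0 hC, hrect, Measure.smul_apply, smul_eq_mul]
    have hres : (m.prod 𝓛).restrict (R ∩ L0 ⁻¹' C) =
        ((m.prod 𝓛).restrict R).restrict (L0 ⁻¹' C) := by
      rw [Measure.restrict_restrict (measurable_L0 hC), inter_comm]
    rw [lurothCylinder_succ, hres, Function.iterate_succ,
      ← Measure.map_map (measurable_L0.iterate n) measurable_L0,
      ← Measure.restrict_map measurable_L0 hC, hrect, Measure.restrict_smul, Measure.map_smul,
      ih, smul_smul, hmeas]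

theorem ae_forall_iterate_mem_branchInterval (hm : IsBernoulli p m) :
    ∀ᵐ q ∂(m.prod 𝓛), ∀ i, (L0^[i] q).2 ∈ ⋃ k, branchInterval k :=
  ae_all_iff.2 fun i => ((measurePreserving_L0 hm).iterate i).quasiMeasurePreserving.ae
    (Measure.quasiMeasurePreserving_snd.ae ae_mem_iUnion_branchInterval)

theorem exists_ae_eq_prefixCylinder_prod_isOpen (hm : IsBernoulli p m) (n : ℕ)
    (f : Fin n → Bool) {U : Set ℝ} (hU : IsOpen U) :
    ∃ t, MeasurableSet[.generateFrom lurothCylinders] t ∧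
      prefixCylinder n f ×ˢ U =ᵐ[m.prod 𝓛] t := by
  refine ⟨⋃₀ {c ∈ lurothCylinders | c ⊆ prefixCylinder n f ×ˢ U}, .sUnion
    (countable_lurothCylinders.mono fun _ h => h.1)
    fun c hc => MeasurableSpace.measurableSet_generateFrom hc.1, ?_⟩
  filter_upwards [ae_forall_iterate_mem_branchInterval hm] with q hq
  refine propext ⟨fun hqs => ?_, fun ⟨c, ⟨_, hc⟩, hqc⟩ => hc hqc⟩
  obtain ⟨c, hc, hqc, hcs⟩ := exists_lurothCylinder_mem_subset hq hU hqs
  exact ⟨c, ⟨hc, hcs⟩, hqc⟩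

end Bernoulli

theorem L0_measurePreserving_ergodic_general (p : ℝ)
    (m : Measure (ℕ → Bool)) (hm : IsBernoulli p m) :
    MeasurePreserving L0
        (m.prod (volume.restrict (Set.Icc (0:ℝ) 1)))
        (m.prod (volume.restrict (Set.Icc (0:ℝ) 1))) ∧
    Ergodic L0 (m.prod (volume.restrict (Set.Icc (0:ℝ) 1))) := by
  have := hm.1
  refine ⟨measurePreserving_L0 hm, ergodic_of_map_iterate_restrict_eq_smul
    (measurePreserving_L0 hm) isPiSystem_lurothCylinders ?_ ?_ fun s hs => ?_⟩
  · rintro _ ⟨n, w, rfl⟩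
    exact measurableSet_lurothCylinder n w.1 w.2
  · rintro _ ⟨n, w, rfl⟩
    exact ⟨n, map_iterate_restrict_lurothCylinder hm n w.1 w.2⟩
  · refine exists_measurableSet_ae_eq_of_generateFrom
      generateFrom_prefixCylinder_prod_isOpen.symm ?_ hs
    rintro _ ⟨_, ⟨n, f, rfl⟩, U, hU, rfl⟩
    exact exists_ae_eq_prefixCylinder_prod_isOpen hm n f hU

/-- for `0 < p < 1` the measure `m_p × λ` is invariant and ergodic for the
random 0-Lüroth transformation `L_0`. -/
theorem L0_measurePreserving_ergodic (p : ℝ) (hp0 : 0 < p) (hp1 : p < 1)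
    (m : Measure (ℕ → Bool)) (hm : IsBernoulli p m) :
    MeasurePreserving L0
        (m.prod (volume.restrict (Set.Icc (0:ℝ) 1)))
        (m.prod (volume.restrict (Set.Icc (0:ℝ) 1))) ∧
    Ergodic L0 (m.prod (volume.restrict (Set.Icc (0:ℝ) 1))) :=
  L0_measurePreserving_ergodic_general p m hm
end
end
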